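/- arXiv:2306.09240 — 8 statements merged into one kernel-verified Lean document; each statement's English description precedes it below -/
import Mathlib

section
/- Let α₁, α₂, β₁, β₂ be nonnegative reals with β₁β₂ < 1 satisfying (α₁α₂ - 1)² ≤ (α₁² - β₁)(α₂² - β₂). Then α₁α₂ ≥ (1/2)(1 + √(β₁β₂)). -/
/-! With `p = α₁α₂` and `s = √(β₁β₂)`, expanding the hypothesis gives
`1 - 2p ≤ s² - (β₂α₁² + β₁α₂²)`, and AM–GM bounds `β₂α₁² + β₁α₂² ≥ 2sp`. Hence
`(1 - s)(1 + s) ≤ (1 - s) · 2p`, and `s < 1` lets us cancel the factor `1 - s`. -/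

theorem two_mul_sqrt_mul_mul_le_add {b₁ b₂ : ℝ} (hb₁ : 0 ≤ b₁) (hb₂ : 0 ≤ b₂) (x y : ℝ) :
    2 * √(b₁ * b₂) * (x * y) ≤ b₂ * x ^ 2 + b₁ * y ^ 2 := by
  calc 2 * √(b₁ * b₂) * (x * y) = 2 * (√b₂ * x) * (√b₁ * y) := by
        rw [Real.sqrt_mul hb₁]; ring
    _ ≤ (√b₂ * x) ^ 2 + (√b₁ * y) ^ 2 := two_mul_le_add_sq _ _
    _ = b₂ * x ^ 2 + b₁ * y ^ 2 := by rw [mul_pow, mul_pow, Real.sq_sqrt hb₁, Real.sq_sqrt hb₂]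

theorem cross_ratio_key_algebraic_step_general
    (α₁ α₂ β₁ β₂ : ℝ) (hβ₁ : 0 ≤ β₁) (hβ₂ : 0 ≤ β₂)
    (hββ : β₁ * β₂ < 1)
    (h : (α₁ * α₂ - 1) ^ 2 ≤ (α₁ ^ 2 - β₁) * (α₂ ^ 2 - β₂)) :
    α₁ * α₂ ≥ (1 / 2) * (1 + Real.sqrt (β₁ * β₂)) := by
  set s := Real.sqrt (β₁ * β₂)
  have hs_sq : s ^ 2 = β₁ * β₂ := Real.sq_sqrt (mul_nonneg hβ₁ hβ₂)
  have hs_lt : s < 1 := (Real.sqrt_lt' one_pos).2 (by rwa [one_pow])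
  have hAM := two_mul_sqrt_mul_mul_le_add hβ₁ hβ₂ α₁ α₂
  have key : (1 - s) * (1 + s) ≤ (1 - s) * (2 * (α₁ * α₂)) := by
    linear_combination h + hAM - hs_sq
  linarith [le_of_mul_le_mul_left key (sub_pos.2 hs_lt)]

theorem cross_ratio_key_algebraic_step
    (α₁ α₂ β₁ β₂ : ℝ) (hα₁ : 0 ≤ α₁) (hα₂ : 0 ≤ α₂) (hβ₁ : 0 ≤ β₁) (hβ₂ : 0 ≤ β₂)
    (hββ : β₁ * β₂ < 1)
    (h : (α₁ * α₂ - 1) ^ 2 ≤ (α₁ ^ 2 - β₁) * (α₂ ^ 2 - β₂)) :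
    α₁ * α₂ ≥ (1 / 2) * (1 + Real.sqrt (β₁ * β₂)) :=
  cross_ratio_key_algebraic_step_general α₁ α₂ β₁ β₂ hβ₁ hβ₂ hββ h
end

section
/- Let V_AC, V_BC, V_AB, V_CC, V_AA be nonnegative reals with V_AB·V_CC > 0, V_AC·V_BC > 0, (V_AC·V_BC − V_AB·V_CC)² ≤ (V_AC² − V_AA·V_CC)·V_BC², and V_AC·V_BC < V_AB·V_CC. Then V_AB·V_CC/(V_AC·V_BC) − 1 ≤ √(1 − V_AA·V_CC/V_AC²), equivalently V_AC·V_BC/(V_AB·V_CC) ≥ (1 + √(1 − V_AA·V_CC/V_AC²))⁻¹. -/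
theorem degenerate_favard_algebraic
    (VAA VAB VAC VBC VCC : ℝ)
    (hAA : 0 ≤ VAA) (hAB : 0 ≤ VAB) (hAC : 0 ≤ VAC) (hBC : 0 ≤ VBC) (hCC : 0 ≤ VCC)
    (hpos₁ : 0 < VAB * VCC) (hpos₂ : 0 < VAC * VBC)
    (hsq : (VAC * VBC - VAB * VCC) ^ 2 ≤ (VAC ^ 2 - VAA * VCC) * VBC ^ 2)
    (hlt : VAC * VBC < VAB * VCC) :
    VAB * VCC / (VAC * VBC) - 1 ≤ Real.sqrt (1 - VAA * VCC / VAC ^ 2) ∧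
    VAC * VBC / (VAB * VCC) ≥ (1 + Real.sqrt (1 - VAA * VCC / VAC ^ 2))⁻¹ := by
  have hACpos : 0 < VAC := by
    rcases lt_or_eq_of_le hAC with h | h
    · exact h
    · exfalso; rw [← h] at hpos₂; simp at hpos₂
  have hBCpos : 0 < VBC := by
    rcases lt_or_eq_of_le hBC with h | h
    · exact h
    · exfalso; rw [← h] at hpos₂; simp at hpos₂
  have ht0 : 0 ≤ VAB * VCC / (VAC * VBC) - 1 := by
    have : 1 ≤ VAB * VCC / (VAC * VBC) := (one_le_div hpos₂).2 hlt.le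
    linarith
  have hkey : (VAB * VCC / (VAC * VBC) - 1) ^ 2 ≤ 1 - VAA * VCC / VAC ^ 2 := by
    rw [div_sub_one (ne_of_gt hpos₂), div_pow, div_le_iff₀ (by positivity)]
    have e : VAA * VCC / VAC ^ 2 * VAC ^ 2 = VAA * VCC :=
      div_mul_cancel₀ _ (by positivity)
    nlinarith [hsq, sq_nonneg VBC]
  have h1 : VAB * VCC / (VAC * VBC) - 1 ≤ Real.sqrt (1 - VAA * VCC / VAC ^ 2) :=
    (Real.le_sqrt ht0 (by nlinarith [sq_nonneg (VAB * VCC / (VAC * VBC) - 1)])).2 hkey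
  refine ⟨h1, ?_⟩
  have hq : VAB * VCC / (VAC * VBC) ≤ 1 + Real.sqrt (1 - VAA * VCC / VAC ^ 2) := by
    linarith
  have hqpos : 0 < VAB * VCC / (VAC * VBC) := div_pos hpos₁ hpos₂
  have := inv_anti₀ hqpos hq
  rwa [inv_div] at this
end

section
/- Let P = (X,≺) be a finite poset with |X| = n, and let z₁ ≺ z₂ ≺ z₃ be three distinct elements of X. For integers k,ℓ ≥ 1, the number F(k,ℓ) of linear extensions L with L(z₂) − L(z₁) = k and L(z₃) − L(z₂) = ℓ is positive if and only if all six inequalities hold: b(z₁,z₂) − 1 ≤ k ≤ n + 1 − b(z₁) − b*(z₂), b(z₂,z₃) − 1 ≤ ℓ ≤ n + 1 − b*(z₃) − b(z₂), and b(z₁,z₃) − 1 ≤ k + ℓ ≤ n + 1 − b*(z₃) − b(z₁). -/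
/-!
Prescribe positions `p c`, counted from `0`, on a chain `C` of a finite poset `A`. They are
realised by a linear extension as soon as the down-set of each `c` fits before `p c`, its up-set
after `p c`, and each interval `[c, d]` of `C` between `p c` and `p d` (Daykin–Daykin). Induct on
`#A`, calling `c ∈ C` tight if its down-set fills exactly the positions `0, …, p c`: put first a
minimal element `x` below every tight element, with `p x = 0` if `x ∈ C`; the conditions then pass
to `A.erase x` with all positions lowered by one. Such an `x` exists: otherwise the minimal
elements below the least tight element `s` all equal one `c ∈ C` with `p c > 0`, so `[c, s]` is
the whole down-set of `s`, too large to fit between `p c` and `p s`; and if nothing is tight, the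
up-set of `c` is all of `A`, too large to fit after `p c`.

For `z₁ < z₂ < z₃` the six inequalities say precisely that some position of `z₁` meets these
conditions.
-/

/-- The number of linear extensions `L` of a finite poset `X`
(order-preserving bijections `X ≃ Fin (card X)`) such that
`L z₂ − L z₁ = k` and `L z₃ − L z₂ = l`. -/
noncomputable def F (X : Type) [PartialOrder X] [Fintype X] (z₁ z₂ z₃ : X) (k l : ℕ) : ℕ :=
  Nat.card {L : X ≃ Fin (Fintype.card X) // (∀ a b : X, a < b → L a < L b) ∧
    (L z₂ : ℕ) = (L z₁ : ℕ) + k ∧ (L z₃ : ℕ) = (L z₂ : ℕ) + l}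

open Finset

section LinearExtension

variable {X : Type*} [PartialOrder X]

theorem IsChain.exists_isLeast_of_forall_minimal_mem {B C : Finset X}
    (hC : IsChain (· ≤ ·) (C : Set X)) (hB : B.Nonempty) (h : ∀ x, Minimal (· ∈ B) x → x ∈ C) :
    ∃ c, IsLeast (B : Set X) c := by
  obtain ⟨b, hb⟩ := hB
  obtain ⟨m, -, hm⟩ := B.exists_le_minimal hb
  refine ⟨m, hm.1, fun u hu => ?_⟩
  obtain ⟨m', hm'u, hm'⟩ := B.exists_le_minimal hu
  rcases hC.total (h m hm) (h m' hm') with hmm' | hm'm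
  · exact hmm'.trans hm'u
  · exact (hm.eq_of_le hm'.1 hm'm).symm ▸ hm'u

structure IsLinearExtension (A : Finset X) (f : X → ℕ) : Prop where
  mapsTo : Set.MapsTo f A (Set.Iio #A)
  injOn : Set.InjOn f A
  strictMonoOn : StrictMonoOn f A

theorem IsLinearExtension.of_erase_minimal [DecidableEq X] {A : Finset X} {f : X → ℕ} {x : X}
    (hf : IsLinearExtension (A.erase x) f) (hx : x ∈ A) (hmin : ∀ u ∈ A, ¬u < x) :
    IsLinearExtension A (fun u => if u = x then 0 else f u + 1) := by
  have hcard := card_erase_add_one hx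
  have mem_erase_of_ne {u} (hu : u ∈ A) (hux : u ≠ x) : u ∈ A.erase x := mem_erase.2 ⟨hux, hu⟩
  refine ⟨fun u hu => ?_, fun u hu v hv huv => ?_, fun u hu v hv huv => ?_⟩
  · by_cases hux : u = x
    · simp only [hux, if_true, Set.mem_Iio]; omega
    · have := hf.mapsTo (mem_erase_of_ne hu hux)
      simp only [hux, if_false, Set.mem_Iio] at this ⊢; omega
  · split_ifs at huv with hux hvx hvx
    · exact hux.trans hvx.symm
    · exact hf.injOn (mem_erase_of_ne hu hux) (mem_erase_of_ne hv hvx) (by omega)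
  · have hvx : v ≠ x := by rintro rfl; exact hmin u hu huv
    by_cases hux : u = x
    · simp [hux, hvx]
    · simpa [hux, hvx] using hf.strictMonoOn (mem_erase_of_ne hu hux) (mem_erase_of_ne hv hvx) huv

variable [DecidableLE X]

def lowerCard (A : Finset X) (z : X) : ℕ := #{u ∈ A | u ≤ z}

def upperCard (A : Finset X) (z : X) : ℕ := #{u ∈ A | z ≤ u}

def intervalCard (A : Finset X) (y z : X) : ℕ := #{u ∈ A | y ≤ u ∧ u ≤ z}

section Counts

variable {A : Finset X} {x y z : X}

theorem lowerCard_pos (hz : z ∈ A) : 0 < lowerCard A z :=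
  card_pos.2 ⟨z, mem_filter.2 ⟨hz, le_rfl⟩⟩

theorem intervalCard_self_le_one (A : Finset X) (z : X) : intervalCard A z z ≤ 1 :=
  card_le_one.2 fun _ hu _ hv => by
    simp only [mem_filter] at hu hv
    exact (le_antisymm hu.2.2 hu.2.1).trans (le_antisymm hv.2.2 hv.2.1).symm

theorem lowerCard_add_upperCard_le (A : Finset X) (y z : X) :
    lowerCard A z + upperCard A y ≤ #A + intervalCard A y z := by
  classical
  have hinter : {u ∈ A | u ≤ z} ∩ {u ∈ A | y ≤ u} = {u ∈ A | y ≤ u ∧ u ≤ z} := by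
    ext u; simp only [mem_inter, mem_filter]; tauto
  have hunion : #({u ∈ A | u ≤ z} ∪ {u ∈ A | y ≤ u}) ≤ #A :=
    card_le_card (union_subset (filter_subset _ _) (filter_subset _ _))
  have := card_union_add_card_inter {u ∈ A | u ≤ z} {u ∈ A | y ≤ u}
  rw [hinter] at this
  unfold lowerCard upperCard intervalCard
  omega

variable [DecidableEq X]

theorem lowerCard_erase_add_one (hx : x ∈ A) (hxz : x ≤ z) :
    lowerCard (A.erase x) z + 1 = lowerCard A z := by
  rw [lowerCard, lowerCard, filter_erase, card_erase_add_one (mem_filter.2 ⟨hx, hxz⟩)]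

theorem lowerCard_erase_of_not_le (hxz : ¬x ≤ z) : lowerCard (A.erase x) z = lowerCard A z := by
  rw [lowerCard, lowerCard, filter_erase, erase_eq_of_notMem]
  exact fun h => hxz (mem_filter.1 h).2

theorem upperCard_erase_le : upperCard (A.erase x) z ≤ upperCard A z :=
  card_le_card (filter_subset_filter _ (erase_subset _ _))

theorem intervalCard_erase_le : intervalCard (A.erase x) y z ≤ intervalCard A y z :=
  card_le_card (filter_subset_filter _ (erase_subset _ _))

end Counts

namespace IsLinearExtension

variable {A : Finset X} {f : X → ℕ} {y z : X}

theorem lowerCard_le (hf : IsLinearExtension A f) (hz : z ∈ A) : lowerCard A z ≤ f z + 1 := by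
  have hcard := card_le_card_of_injOn f (s := {u ∈ A | u ≤ z}) (t := range (f z + 1))
    (fun u hu => by
      have hu := mem_filter.1 hu
      simpa [Nat.lt_succ_iff] using hf.strictMonoOn.monotoneOn hu.1 hz hu.2)
    (hf.injOn.mono (filter_subset _ _))
  rwa [card_range] at hcard

theorem add_upperCard_le (hf : IsLinearExtension A f) (hz : z ∈ A) :
    f z + upperCard A z ≤ #A := by
  have hcard := card_le_card_of_injOn f (s := {u ∈ A | z ≤ u}) (t := Ico (f z) #A)
    (fun u hu => by
      have hu := mem_filter.1 hu
      simpa using ⟨hf.strictMonoOn.monotoneOn hz hu.1 hu.2, hf.mapsTo hu.1⟩)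
    (hf.injOn.mono (filter_subset _ _))
  have := hf.mapsTo hz
  simp only [Nat.card_Ico, Set.mem_Iio] at *
  unfold upperCard
  omega

theorem intervalCard_add_le (hf : IsLinearExtension A f) (hy : y ∈ A) (hz : z ∈ A)
    (hyz : y ≤ z) : intervalCard A y z + f y ≤ f z + 1 := by
  have hcard := card_le_card_of_injOn f (s := {u ∈ A | y ≤ u ∧ u ≤ z}) (t := Icc (f y) (f z))
    (fun u hu => by
      have hu := mem_filter.1 hu
      simpa using ⟨hf.strictMonoOn.monotoneOn hy hu.1 hu.2.1,
        hf.strictMonoOn.monotoneOn hu.1 hz hu.2.2⟩)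
    (hf.injOn.mono (filter_subset _ _))
  have := hf.strictMonoOn.monotoneOn hy hz hyz
  rw [Nat.card_Icc] at hcard
  unfold intervalCard
  omega

end IsLinearExtension

structure IsAdmissible (A C : Finset X) (p : X → ℕ) : Prop where
  subset : C ⊆ A
  isChain : IsChain (· ≤ ·) (C : Set X)
  lowerCard_le : ∀ c ∈ C, lowerCard A c ≤ p c + 1
  add_upperCard_le : ∀ c ∈ C, p c + upperCard A c ≤ #A
  intervalCard_add_le : ∀ c ∈ C, ∀ d ∈ C, c ≤ d → intervalCard A c d + p c ≤ p d + 1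

namespace IsAdmissible

variable {A C : Finset X} {p : X → ℕ} {x : X}

theorem pos_of_ne (h : IsAdmissible A C p) (hx : x ∈ A)
    (hxT : ∀ c ∈ C, lowerCard A c = p c + 1 → x ≤ c) {c : X} (hc : c ∈ C) (hcx : c ≠ x) :
    0 < p c := by
  by_contra! hpc
  have hcA := h.subset hc
  have hle := h.lowerCard_le c hc
  have hxc := hxT c hc (by have := lowerCard_pos hcA; omega)
  exact hcx (card_le_one.1 (by omega : lowerCard A c ≤ 1) c (mem_filter.2 ⟨hcA, le_rfl⟩)
    x (mem_filter.2 ⟨hx, hxc⟩))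

theorem exists_removable (h : IsAdmissible A C p) (hA : A.Nonempty) :
    ∃ x ∈ A, (∀ u ∈ A, ¬u < x) ∧ (∀ c ∈ C, lowerCard A c = p c + 1 → x ≤ c) ∧
      (x ∈ C → p x = 0) := by
  set T := {c ∈ C | lowerCard A c = p c + 1}
  set B := {u ∈ A | ∀ t ∈ T, u ≤ t}
  suffices ∃ x, Minimal (· ∈ B) x ∧ (x ∈ C → p x = 0) by
    obtain ⟨x, hx, hxC⟩ := this
    obtain ⟨hxA, hxT⟩ := mem_filter.1 hx.1
    refine ⟨x, hxA, fun u hu hux => hx.not_lt ?_ hux,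
      fun c hc hct => hxT c (mem_filter.2 ⟨hc, hct⟩), hxC⟩
    exact mem_filter.2 ⟨hu, fun t ht => hux.le.trans (hxT t ht)⟩
  have hT : T = ∅ ∨ ∃ s, IsLeast (T : Set X) s :=
    T.eq_empty_or_nonempty.imp_right fun hT =>
      h.isChain.exists_isLeast_of_forall_minimal_mem hT fun x hx => (mem_filter.1 hx.1).1
  have hBne : B.Nonempty := by
    rcases hT with hT | ⟨s, hsT, hs⟩
    · simpa [B, hT] using hA
    · exact ⟨s, mem_filter.2 ⟨h.subset (mem_filter.1 hsT).1, hs⟩⟩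
  by_contra! hB
  obtain ⟨c, hcB, hc⟩ :=
    h.isChain.exists_isLeast_of_forall_minimal_mem hBne fun x hx => (hB x hx).1
  obtain ⟨hcC, hpc⟩ := hB c ⟨hcB, fun u hu _ => hc hu⟩
  obtain ⟨-, hcT⟩ := mem_filter.1 hcB
  rcases hT with hT | ⟨s, hsT, hs⟩
  · have hup : upperCard A c = #A :=
      congrArg card (filter_true_of_mem fun u hu => hc (mem_filter.2 ⟨hu, by simp [hT]⟩))
    have := h.add_upperCard_le c hcC
    omega
  · obtain ⟨hsC, hs_tight⟩ := mem_filter.1 hsT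
    have hsub : lowerCard A s ≤ intervalCard A c s := card_le_card fun u hu => by
      obtain ⟨huA, hus⟩ := mem_filter.1 hu
      exact mem_filter.2 ⟨huA, hc (mem_filter.2 ⟨huA, fun t ht => hus.trans (hs ht)⟩), hus⟩
    have := h.intervalCard_add_le c hcC s hsC (hcT s hsT)
    omega

variable [DecidableEq X]

theorem erase (h : IsAdmissible A C p) (hx : x ∈ A)
    (hxT : ∀ c ∈ C, lowerCard A c = p c + 1 → x ≤ c) :
    IsAdmissible (A.erase x) (C.erase x) (fun u => p u - 1) where
  subset := erase_subset_erase x h.subset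
  isChain := h.isChain.mono (by simp)
  lowerCard_le c hc := by
    obtain ⟨hcx, hc⟩ := mem_erase.1 hc
    have := h.lowerCard_le c hc
    by_cases hxc : x ≤ c
    · have := lowerCard_erase_add_one hx hxc; omega
    · have := mt (hxT c hc) hxc
      rw [lowerCard_erase_of_not_le hxc]; omega
  add_upperCard_le c hc := by
    obtain ⟨hcx, hc⟩ := mem_erase.1 hc
    have := h.add_upperCard_le c hc
    have := h.pos_of_ne hx hxT hc hcx
    have : upperCard (A.erase x) c ≤ upperCard A c := upperCard_erase_le
    rw [card_erase_of_mem hx]; omega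
  intervalCard_add_le c hc d hd hcd := by
    obtain ⟨hcx, hc⟩ := mem_erase.1 hc
    obtain ⟨hdx, hd⟩ := mem_erase.1 hd
    have := h.intervalCard_add_le c hc d hd hcd
    have := h.pos_of_ne hx hxT hc hcx
    have : intervalCard (A.erase x) c d ≤ intervalCard A c d := intervalCard_erase_le
    omega

theorem exists_isLinearExtension (h : IsAdmissible A C p) :
    ∃ f, IsLinearExtension A f ∧ Set.EqOn f p C := by
  induction A using Finset.strongInduction generalizing C p with
  | H A ih =>
  rcases A.eq_empty_or_nonempty with rfl | hA
  · exact ⟨p, ⟨by simp, by simp, by simp [StrictMonoOn]⟩, Set.eqOn_refl p _⟩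
  obtain ⟨x, hxA, hmin, hxT, hxC⟩ := h.exists_removable hA
  obtain ⟨f, hf, hfp⟩ := ih _ (erase_ssubset hxA) (h.erase hxA hxT)
  refine ⟨_, hf.of_erase_minimal hxA hmin, fun c hc => ?_⟩
  by_cases hcx : c = x
  · simp [hcx, hxC (hcx ▸ hc)]
  · have := h.pos_of_ne hxA hxT hc hcx
    have : f c = p c - 1 := hfp (mem_erase.2 ⟨hcx, hc⟩)
    simp only [hcx, if_false]
    omega

end IsAdmissible

section Chain₃

variable [DecidableEq X] {A : Finset X} {z₁ z₂ z₃ : X} {k l q : ℕ}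

theorem isAdmissible_chain₃ (h₁ : z₁ ∈ A) (h₂ : z₂ ∈ A) (h₃ : z₃ ∈ A) (h12 : z₁ < z₂)
    (h23 : z₂ < z₃) (hq₁ : lowerCard A z₁ ≤ q + 1) (hq₂ : lowerCard A z₂ ≤ q + k + 1)
    (hq₃ : lowerCard A z₃ ≤ q + k + l + 1) (hq₁' : q + upperCard A z₁ ≤ #A)
    (hq₂' : q + k + upperCard A z₂ ≤ #A) (hq₃' : q + k + l + upperCard A z₃ ≤ #A)
    (H₁₂ : intervalCard A z₁ z₂ ≤ k + 1) (H₂₃ : intervalCard A z₂ z₃ ≤ l + 1)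
    (H₁₃ : intervalCard A z₁ z₃ ≤ k + l + 1) :
    IsAdmissible A {z₁, z₂, z₃}
      (fun u => if u = z₁ then q else if u = z₂ then q + k else q + k + l) := by
  have h13 := h12.trans h23
  have h21 := h12.not_ge
  have h32 := h23.not_ge
  have h31 := h13.not_ge
  have := intervalCard_self_le_one A z₁
  have := intervalCard_self_le_one A z₂
  have := intervalCard_self_le_one A z₃
  refine ⟨by simp [insert_subset_iff, h₁, h₂, h₃], ?_, ?_, ?_, ?_⟩
  · simp only [coe_insert, coe_singleton]
    refine (Set.subsingleton_singleton.isChain.insert ?_).insert ?_ <;>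
      simp [h12.le, h23.le, h13.le]
  all_goals simp only [mem_insert, mem_singleton]
  · rintro c (rfl | rfl | rfl) <;> simp only [h12.ne', h23.ne', h13.ne', ↓reduceIte] <;> omega
  · rintro c (rfl | rfl | rfl) <;> simp only [h12.ne', h23.ne', h13.ne', ↓reduceIte] <;> omega
  · rintro c (rfl | rfl | rfl) d (rfl | rfl | rfl) hcd <;>
      first | contradiction | (simp only [h12.ne', h23.ne', h13.ne', ↓reduceIte]; omega)

theorem exists_isLinearExtension_chain₃_iff (h₁ : z₁ ∈ A) (h₂ : z₂ ∈ A) (h₃ : z₃ ∈ A)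
    (h12 : z₁ < z₂) (h23 : z₂ < z₃) :
    (∃ f, IsLinearExtension A f ∧ f z₂ = f z₁ + k ∧ f z₃ = f z₂ + l) ↔
      intervalCard A z₁ z₂ ≤ k + 1 ∧ k + lowerCard A z₁ + upperCard A z₂ ≤ #A + 1 ∧
      intervalCard A z₂ z₃ ≤ l + 1 ∧ l + upperCard A z₃ + lowerCard A z₂ ≤ #A + 1 ∧
      intervalCard A z₁ z₃ ≤ k + l + 1 ∧ k + l + upperCard A z₃ + lowerCard A z₁ ≤ #A + 1 := by
  constructor
  · rintro ⟨f, hf, hf₂, hf₃⟩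
    have := hf.intervalCard_add_le h₁ h₂ h12.le
    have := hf.intervalCard_add_le h₂ h₃ h23.le
    have := hf.intervalCard_add_le h₁ h₃ (h12.trans h23).le
    have := hf.lowerCard_le h₁
    have := hf.lowerCard_le h₂
    have := hf.add_upperCard_le h₂
    have := hf.add_upperCard_le h₃
    omega
  rintro ⟨H₁₂, H₂, H₂₃, H₄, H₁₃, H₆⟩
  -- the least position of `z₁` compatible with the down-sets of `z₁`, `z₂`, `z₃`
  set q := max (max (lowerCard A z₁ - 1) (lowerCard A z₂ - 1 - k)) (lowerCard A z₃ - 1 - k - l)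
  have := lowerCard_pos h₁
  have := intervalCard_self_le_one A z₁
  have := intervalCard_self_le_one A z₂
  have := intervalCard_self_le_one A z₃
  have := lowerCard_add_upperCard_le A z₁ z₁
  have := lowerCard_add_upperCard_le A z₂ z₂
  have := lowerCard_add_upperCard_le A z₃ z₃
  have := lowerCard_add_upperCard_le A z₁ z₂
  have := lowerCard_add_upperCard_le A z₂ z₃
  have := lowerCard_add_upperCard_le A z₁ z₃
  obtain ⟨f, hf, hfp⟩ := (isAdmissible_chain₃ (q := q) h₁ h₂ h₃ h12 h23 (by omega) (by omega)
    (by omega) (by omega) (by omega) (by omega) H₁₂ H₂₃ H₁₃).exists_isLinearExtension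
  have hf₁ : f z₁ = q := by simpa using hfp (by simp : z₁ ∈ _)
  have hf₂ : f z₂ = q + k := by simpa [h12.ne'] using hfp (by simp : z₂ ∈ _)
  have hf₃ : f z₃ = q + k + l := by
    simpa [h23.ne', (h12.trans h23).ne'] using hfp (by simp : z₃ ∈ _)
  exact ⟨f, hf, by omega, by omega⟩

end Chain₃

end LinearExtension

theorem isLinearExtension_univ_of_strictMono {X : Type*} [PartialOrder X] [Fintype X]
    {L : X ≃ Fin (Fintype.card X)} (hL : StrictMono L) :
    IsLinearExtension (univ : Finset X) (fun u => (L u : ℕ)) where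
  mapsTo u _ := by simp
  injOn _ _ _ _ h := L.injective (Fin.ext h)
  strictMonoOn _ _ _ _ h := hL h

theorem IsLinearExtension.exists_equiv {X : Type*} [PartialOrder X] [Fintype X] {f : X → ℕ}
    (hf : IsLinearExtension (univ : Finset X) f) :
    ∃ L : X ≃ Fin (Fintype.card X), StrictMono L ∧ ∀ u, (L u : ℕ) = f u := by
  let g (u : X) : Fin (Fintype.card X) := ⟨f u, by simpa using hf.mapsTo (mem_univ u)⟩
  have hg : Function.Injective g := fun u v h =>
    hf.injOn (mem_univ u) (mem_univ v) (congrArg Fin.val h)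
  exact ⟨.ofBijective g ((Fintype.bijective_iff_injective_and_card g).2 ⟨hg, by simp⟩),
    fun a b hab => hf.strictMonoOn (mem_univ a) (mem_univ b) hab, fun _ => rfl⟩

theorem F_pos_iff {X : Type} [PartialOrder X] [Fintype X] {z₁ z₂ z₃ : X} {k l : ℕ} :
    0 < F X z₁ z₂ z₃ k l ↔
      ∃ f, IsLinearExtension (univ : Finset X) f ∧ f z₂ = f z₁ + k ∧ f z₃ = f z₂ + l := by
  rw [F, Finite.card_pos_iff]
  constructor
  · rintro ⟨L, hL, h₂, h₃⟩
    exact ⟨_, isLinearExtension_univ_of_strictMono fun a b => hL a b, h₂, h₃⟩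
  · rintro ⟨f, hf, h₂, h₃⟩
    obtain ⟨L, hL, hLf⟩ := hf.exists_equiv
    exact ⟨⟨L, fun a b h => hL h, by simp [hLf, h₂], by simp [hLf, h₃]⟩⟩

theorem vanishing_characterization_general (X : Type) [PartialOrder X] [Fintype X]
    (n : ℕ) (hn : Fintype.card X = n)
    (z₁ z₂ z₃ : X) (h12 : z₁ < z₂) (h23 : z₂ < z₃)
    (k l : ℕ) :
    0 < F X z₁ z₂ z₃ k l ↔
      (Nat.card {u : X // z₁ ≤ u ∧ u ≤ z₂} ≤ k + 1 ∧
        k + Nat.card {u : X // u ≤ z₁} + Nat.card {u : X // z₂ ≤ u} ≤ n + 1 ∧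
       Nat.card {u : X // z₂ ≤ u ∧ u ≤ z₃} ≤ l + 1 ∧
        l + Nat.card {u : X // z₃ ≤ u} + Nat.card {u : X // u ≤ z₂} ≤ n + 1 ∧
       Nat.card {u : X // z₁ ≤ u ∧ u ≤ z₃} ≤ k + l + 1 ∧
        k + l + Nat.card {u : X // z₃ ≤ u} + Nat.card {u : X // u ≤ z₁} ≤ n + 1) := by
  classical
  subst hn
  simp only [Nat.card_eq_fintype_card, Fintype.card_subtype]
  rw [F_pos_iff, exists_isLinearExtension_chain₃_iff (mem_univ _) (mem_univ _) (mem_univ _) h12 h23,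
    card_univ]
  rfl

theorem vanishing_characterization (X : Type) [PartialOrder X] [Fintype X]
    (n : ℕ) (hn : Fintype.card X = n)
    (z₁ z₂ z₃ : X) (h12 : z₁ < z₂) (h23 : z₂ < z₃)
    (k l : ℕ) (hk : 1 ≤ k) (hl : 1 ≤ l) :
    0 < F X z₁ z₂ z₃ k l ↔
      (Nat.card {u : X // z₁ ≤ u ∧ u ≤ z₂} ≤ k + 1 ∧
        k + Nat.card {u : X // u ≤ z₁} + Nat.card {u : X // z₂ ≤ u} ≤ n + 1 ∧
       Nat.card {u : X // z₂ ≤ u ∧ u ≤ z₃} ≤ l + 1 ∧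
        l + Nat.card {u : X // z₃ ≤ u} + Nat.card {u : X // u ≤ z₂} ≤ n + 1 ∧
       Nat.card {u : X // z₁ ≤ u ∧ u ≤ z₃} ≤ k + l + 1 ∧
        k + l + Nat.card {u : X // z₃ ≤ u} + Nat.card {u : X // u ≤ z₁} ≤ n + 1) :=
  vanishing_characterization_general X n hn z₁ z₂ z₃ h12 h23 k l
end

section
/- Let P = (X,≺) be a finite poset, z₁ ≺ z₂ ≺ z₃ distinct elements, and let S = {(k,ℓ) ∈ ℕ² : F(k,ℓ) > 0} be the support of F. If F(k+1,ℓ)·F(k,ℓ+1) = 0 for some k,ℓ ≥ 1, then F(k,ℓ)·F(k+1,ℓ+1) = 0. -/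
open Finset

section LowerSets

variable {α : Type*} [PartialOrder α]

theorem exists_isLowerSet_card_eq [DecidableEq α] {P Q : Finset α}
    (hP : IsLowerSet (P : Set α)) (hQ : IsLowerSet (Q : Set α)) (hPQ : P ⊆ Q) {m : ℕ}
    (hPm : #P ≤ m) (hmQ : m ≤ #Q) :
    ∃ R : Finset α, IsLowerSet (R : Set α) ∧ P ⊆ R ∧ R ⊆ Q ∧ #R = m := by
  obtain ⟨d, rfl⟩ := Nat.exists_eq_add_of_le hPm
  induction d with
  | zero => exact ⟨P, hP, subset_rfl, hPQ, rfl⟩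
  | succ d ih =>
    obtain ⟨R, hR, hPR, hRQ, hRcard⟩ := ih (by omega) (by omega)
    obtain ⟨y, hy⟩ := (Q \ R).exists_minimal
      (sdiff_nonempty.2 fun h => by have := card_le_card h; omega)
    obtain ⟨hyQ, hyR⟩ := mem_sdiff.1 hy.prop
    refine ⟨insert y R, ?_, hPR.trans (subset_insert _ _), insert_subset hyQ hRQ, ?_⟩
    · intro b a hab hb
      simp only [coe_insert, Set.mem_insert_iff, mem_coe] at hb ⊢
      rcases hb with rfl | hb
      · by_cases haR : a ∈ R
        · exact .inr haR
        · exact .inl (hy.eq_of_le (mem_sdiff.2 ⟨hQ hab hyQ, haR⟩) hab)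
      · exact .inr (hR hab hb)
    · rw [card_insert_of_notMem hyR, hRcard, add_assoc]

theorem IsLowerSet.erase_of_maximal [DecidableEq α] {A : Finset α} {z : α}
    (hA : IsLowerSet (A : Set α)) (hz : Maximal (· ∈ A) z) :
    IsLowerSet (A.erase z : Set α) := by
  rw [coe_erase]
  exact hA.erase fun _ hy hzy => hz.eq_of_ge hy hzy

end LowerSets

section EquivFin

variable {α : Type*}

theorem Equiv.val_lt_card_iff_mem {n : ℕ} (e : α ≃ Fin n) {D : Finset α}
    (hD : ∀ x ∈ D, ∀ y ∉ D, e x < e y) (x : α) : (e x : ℕ) < #D ↔ x ∈ D := by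
  classical
  constructor
  · intro h
    by_contra hx
    have : D.map e.toEmbedding ⊆ Iio (e x) := fun i hi => by
      obtain ⟨y, hy, rfl⟩ := mem_map.1 hi
      exact mem_Iio.2 (hD y hy x hx)
    have := card_le_card this
    rw [card_map, Fin.card_Iio] at this
    omega
  · intro hx
    have : Iic (e x) ⊆ D.map e.toEmbedding := fun i hi => by
      refine mem_map.2 ⟨e.symm i, by_contra fun hy => ?_, by simp⟩
      exact (mem_Iic.1 hi).not_gt (by simpa using hD x hx _ hy)
    have := card_le_card this
    rw [card_map, Fin.card_Iic] at this
    omega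

theorem Equiv.val_add_one_eq_card {n : ℕ} [DecidableEq α] {L : α ≃ Fin n} {D : Finset α}
    {z : α} (hz : z ∈ D) (hD : ∀ x, (L x : ℕ) < #D ↔ x ∈ D)
    (hD' : ∀ x, (L x : ℕ) < #(D.erase z) ↔ x ∈ D.erase z) : (L z : ℕ) + 1 = #D := by
  have h₁ := (hD z).2 hz
  have h₂ := mt (hD' z).1 (notMem_erase z D)
  rw [card_erase_of_mem hz] at h₂
  omega

theorem Equiv.card_filter_le [Fintype α] {n : ℕ} (L : α ≃ Fin n) (z : α) :
    #({y | L y ≤ L z} : Finset α) = L z + 1 := by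
  rw [card_equiv L (t := Iic (L z)) (by simp), Fin.card_Iic]

end EquivFin

section LinearExtensions

variable {α : Type*} [PartialOrder α] [Fintype α]

theorem exists_equivFin_strictMono_refining {β : Type*} [LinearOrder β] (r : α → β)
    (hr : Monotone r) :
    ∃ L : α ≃ Fin (Fintype.card α), StrictMono L ∧ ∀ x y, r x < r y → L x < L y := by
  classical
  have hext : StrictMono (toLinearExtension : α → LinearExtension α) :=
    toLinearExtension.monotone.strictMono_of_injective fun _ _ h => h
  set κ : α → β ×ₗ LinearExtension α := fun x => toLex (r x, toLinearExtension x)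
  have hκ : StrictMono κ := fun x y hxy =>
    Prod.Lex.toLex_strictMono (Prod.mk_lt_mk_of_le_of_lt (hr hxy.le) (hext hxy))
  have hκi : Function.Injective κ := fun _ _ h =>
    congrArg (fun p : β ×ₗ LinearExtension α => ((ofLex p).2 : α)) h
  let L := (Equiv.ofInjective κ hκi).trans
    (Fintype.orderIsoFinOfCardEq _ (Set.card_range_of_injective hκi)).symm.toEquiv
  have hL : ∀ x y, L x < L y ↔ κ x < κ y := fun x y => by
    simp only [L, Equiv.trans_apply, OrderIso.coe_toEquiv, OrderIso.lt_iff_lt]; rfl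
  exact ⟨L, fun x y hxy => (hL x y).2 (hκ hxy),
    fun x y hxy => (hL x y).2 (Prod.Lex.toLex_lt_toLex.2 (.inl hxy))⟩

theorem exists_equivFin_strictMono_initialSegments {ι : Type*} [Fintype ι] [LinearOrder ι]
    (D : ι → Finset α) (hD : Monotone D) (hlow : ∀ i, IsLowerSet (D i : Set α)) :
    ∃ L : α ≃ Fin (Fintype.card α), StrictMono L ∧ ∀ i x, (L x : ℕ) < #(D i) ↔ x ∈ D i := by
  classical
  have hr : Monotone fun x => #{i | x ∉ D i} := fun x y hxy => card_le_card fun i hi => by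
    simp only [mem_filter, mem_univ, true_and] at hi ⊢
    exact fun hy => hi (hlow i hxy hy)
  obtain ⟨L, hL, hLr⟩ := exists_equivFin_strictMono_refining _ hr
  refine ⟨L, hL, fun i => L.val_lt_card_iff_mem fun x hx y hy => hLr x y (card_lt_card ?_)⟩
  refine (ssubset_iff_of_subset fun j hj => ?_).2 ⟨i, by simpa using hy, by simpa using hx⟩
  simp only [mem_filter, mem_univ, true_and] at hj ⊢
  have hji : j < i := lt_of_not_ge fun hij => hj (hD hij hx)
  exact fun hyj => hy (hD hji.le hyj)

end LinearExtensions

section Gaps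

variable {X : Type} [PartialOrder X] [Fintype X] {z₁ z₂ z₃ : X} {a b : ℕ}

theorem F_ne_zero_iff : F X z₁ z₂ z₃ a b ≠ 0 ↔ ∃ L : X ≃ Fin (Fintype.card X),
    StrictMono L ∧ (L z₂ : ℕ) = L z₁ + a ∧ (L z₃ : ℕ) = L z₂ + b := by
  rw [F, Nat.card_ne_zero, nonempty_subtype]
  exact ⟨fun h => h.1, fun h => ⟨h, inferInstance⟩⟩

structure IsGappedChain (z₁ z₂ z₃ : X) (a b : ℕ) (A B C : Finset X) : Prop where
  isLowerSet_left : IsLowerSet (A : Set X)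
  isLowerSet_mid : IsLowerSet (B : Set X)
  isLowerSet_right : IsLowerSet (C : Set X)
  maximal_left : Maximal (· ∈ A) z₁
  maximal_mid : Maximal (· ∈ B) z₂
  maximal_right : Maximal (· ∈ C) z₃
  subset_left : A ⊆ B
  subset_right : B ⊆ C
  card_mid : #B = #A + a
  card_right : #C = #B + b

theorem isLowerSet_filter_le {n : ℕ} {L : X → Fin n} (hL : Monotone L) (z : X) :
    IsLowerSet (({y | L y ≤ L z} : Finset X) : Set X) := fun x y hxy hy => by
  simp only [coe_filter, mem_univ, true_and, Set.mem_ofPred_eq] at hy ⊢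
  exact (hL hxy).trans hy

theorem maximal_mem_filter_le {n : ℕ} {L : X → Fin n} (hL : StrictMono L) (z : X) :
    Maximal (· ∈ ({y | L y ≤ L z} : Finset X)) z :=
  maximal_iff_forall_gt.2 ⟨by simp, fun y hzy hy => (hL hzy).not_ge (by simpa using hy)⟩

theorem exists_isGappedChain_of_F_ne_zero (hF : F X z₁ z₂ z₃ a b ≠ 0) :
    ∃ A B C, IsGappedChain z₁ z₂ z₃ a b A B C := by
  obtain ⟨L, hL, e₂, e₃⟩ := F_ne_zero_iff.1 hF
  have hsub : ∀ u v : X, (L u : ℕ) ≤ L v →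
      ({y | L y ≤ L u} : Finset X) ⊆ ({y | L y ≤ L v} : Finset X) := fun u v huv y hy => by
    simp only [mem_filter, mem_univ, true_and, Fin.le_def] at hy ⊢
    omega
  exact ⟨_, _, _,
    { isLowerSet_left := isLowerSet_filter_le hL.monotone z₁
      isLowerSet_mid := isLowerSet_filter_le hL.monotone z₂
      isLowerSet_right := isLowerSet_filter_le hL.monotone z₃
      maximal_left := maximal_mem_filter_le hL z₁
      maximal_mid := maximal_mem_filter_le hL z₂
      maximal_right := maximal_mem_filter_le hL z₃
      subset_left := hsub z₁ z₂ (by omega)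
      subset_right := hsub z₂ z₃ (by omega)
      card_mid := by simp only [L.card_filter_le]; omega
      card_right := by simp only [L.card_filter_le]; omega }⟩

theorem IsGappedChain.F_ne_zero {A B C : Finset X} (h : IsGappedChain z₁ z₂ z₃ a b A B C)
    (h12 : z₁ < z₂) (h23 : z₂ < z₃) : F X z₁ z₂ z₃ a b ≠ 0 := by
  classical
  have hA : A ⊆ B.erase z₂ := fun y hy =>
    mem_erase.2 ⟨by rintro rfl; exact h.maximal_left.not_gt hy h12, h.subset_left hy⟩
  have hB : B ⊆ C.erase z₃ := fun y hy =>
    mem_erase.2 ⟨by rintro rfl; exact h.maximal_mid.not_gt hy h23, h.subset_right hy⟩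
  have hmono : Monotone ![A.erase z₁, A, B.erase z₂, B, C.erase z₃, C] := by
    refine Fin.monotone_iff_le_succ.2 fun i => ?_
    fin_cases i
    exacts [erase_subset _ _, hA, erase_subset _ _, hB, erase_subset _ _]
  obtain ⟨L, hL, hpos⟩ := exists_equivFin_strictMono_initialSegments _ hmono fun i => by
    fin_cases i
    exacts [h.isLowerSet_left.erase_of_maximal h.maximal_left, h.isLowerSet_left,
      h.isLowerSet_mid.erase_of_maximal h.maximal_mid, h.isLowerSet_mid,
      h.isLowerSet_right.erase_of_maximal h.maximal_right, h.isLowerSet_right]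
  have p₁ := Equiv.val_add_one_eq_card h.maximal_left.1 (hpos 1) (hpos 0)
  have p₂ := Equiv.val_add_one_eq_card h.maximal_mid.1 (hpos 3) (hpos 2)
  have p₃ := Equiv.val_add_one_eq_card h.maximal_right.1 (hpos 5) (hpos 4)
  have := h.card_mid
  have := h.card_right
  exact F_ne_zero_iff.2 ⟨L, hL, by omega, by omega⟩

end Gaps

section Admissible

variable {X : Type} [PartialOrder X] [Fintype X] [DecidableEq X] [DecidableLE X] [DecidableLT X]
  {z₁ z₂ z₃ : X} {a b : ℕ}

/-- `B` is a candidate for the elements placed at or below `z₂` in a linear extension with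
gaps `(a, b)`: the four inequalities say exactly that `A` and `C` can be fitted around it. -/
structure Admissible (z₁ z₂ z₃ : X) (a b : ℕ) (B : Finset X) : Prop where
  isLowerSet : IsLowerSet (B : Set X)
  maximal : Maximal (· ∈ B) z₂
  card_filter_gt_le : #{y ∈ B | z₁ < y} ≤ a
  card_Iic_add_le : #{y | y ≤ z₁} + a ≤ #B
  card_add_le : #B + b ≤ #{y | ¬ z₃ < y}
  card_Iic_sdiff_le : #(({y | y ≤ z₃} : Finset X) \ B) ≤ b

theorem IsGappedChain.admissible {A B C : Finset X} (h : IsGappedChain z₁ z₂ z₃ a b A B C) :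
    Admissible z₁ z₂ z₃ a b B where
  isLowerSet := h.isLowerSet_mid
  maximal := h.maximal_mid
  card_filter_gt_le := by
    have : {y ∈ B | z₁ < y} ⊆ B \ A := fun y hy => by
      rw [mem_filter] at hy
      exact mem_sdiff.2 ⟨hy.1, fun hyA => h.maximal_left.not_gt hyA hy.2⟩
    calc _ ≤ #(B \ A) := card_le_card this
      _ = a := by rw [card_sdiff_of_subset h.subset_left, h.card_mid]; omega
  card_Iic_add_le := by
    have : ({y | y ≤ z₁} : Finset X) ⊆ A := fun y hy =>
      h.isLowerSet_left (mem_filter.1 hy).2 h.maximal_left.1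
    have := card_le_card this
    rw [h.card_mid]
    omega
  card_add_le := by
    have : C ⊆ ({y | ¬ z₃ < y} : Finset X) := fun y hy =>
      mem_filter.2 ⟨mem_univ _, h.maximal_right.not_gt hy⟩
    rw [← h.card_right]
    exact card_le_card this
  card_Iic_sdiff_le := by
    have : ({y | y ≤ z₃} : Finset X) ⊆ C := fun y hy =>
      h.isLowerSet_right (mem_filter.1 hy).2 h.maximal_right.1
    calc _ ≤ #(C \ B) := card_le_card (sdiff_subset_sdiff this subset_rfl)
      _ = b := by rw [card_sdiff_of_subset h.subset_right, h.card_right]; omega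

theorem Admissible.exists_isGappedChain {B : Finset X} (hB : Admissible z₁ z₂ z₃ a b B)
    (h12 : z₁ < z₂) (h23 : z₂ < z₃) : ∃ A C, IsGappedChain z₁ z₂ z₃ a b A B C := by
  have hIic : ∀ z : X, IsLowerSet (({y | y ≤ z} : Finset X) : Set X) := fun z x y hxy hy => by
    simp only [coe_filter, mem_univ, true_and, Set.mem_ofPred_eq] at hy ⊢
    exact hxy.trans hy
  have hnotgt : ∀ z : X, IsLowerSet (({y | ¬ z < y} : Finset X) : Set X) := fun z x y hxy hy => by
    simp only [coe_filter, mem_univ, true_and, Set.mem_ofPred_eq] at hy ⊢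
    exact fun hzx => hy (hzx.trans_le hxy)
  obtain ⟨A, hA, hA₀, hA₁, hAcard⟩ := exists_isLowerSet_card_eq (hIic z₁)
    (Q := {y ∈ B | ¬ z₁ < y})
    (fun x y hxy hy => by
      simp only [coe_filter, Set.mem_ofPred_eq] at hy ⊢
      exact ⟨hB.isLowerSet hxy hy.1, fun h => hy.2 (h.trans_le hxy)⟩)
    (fun y hy => mem_filter.2
      ⟨hB.isLowerSet ((mem_filter.1 hy).2.trans h12.le) hB.maximal.1, (mem_filter.1 hy).2.not_gt⟩)
    (m := #B - a) (by have := hB.card_Iic_add_le; omega)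
    (by
      have := card_filter_add_card_filter_not (s := B) (z₁ < ·)
      have := hB.card_filter_gt_le
      omega)
  obtain ⟨C, hC, hC₀, hC₁, hCcard⟩ := exists_isLowerSet_card_eq
    (P := ({y | y ≤ z₃} : Finset X) ∪ B) (by rw [coe_union]; exact (hIic z₃).union hB.isLowerSet)
    (hnotgt z₃)
    (fun y hy => mem_filter.2 ⟨mem_univ _, (mem_union.1 hy).elim
      (fun hy => (mem_filter.1 hy).2.not_gt) fun hy h => hB.maximal.not_gt hy (h23.trans h)⟩)
    (m := #B + b) (by rw [← card_sdiff_add_card]; have := hB.card_Iic_sdiff_le; omega)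
    hB.card_add_le
  refine ⟨A, C, hA, hB.isLowerSet, hC, ?_, hB.maximal, ?_, hA₁.trans (filter_subset _ _),
    subset_union_right.trans hC₀, by have := hB.card_Iic_add_le; omega, hCcard⟩
  · exact maximal_iff_forall_gt.2 ⟨hA₀ (by simp), fun y hzy hy => (mem_filter.1 (hA₁ hy)).2 hzy⟩
  · exact maximal_iff_forall_gt.2
      ⟨hC₀ (mem_union_left _ (by simp)), fun y hzy hy => (mem_filter.1 (hC₁ hy)).2 hzy⟩

theorem F_ne_zero_iff_exists_admissible (h12 : z₁ < z₂) (h23 : z₂ < z₃) :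
    F X z₁ z₂ z₃ a b ≠ 0 ↔ ∃ B, Admissible z₁ z₂ z₃ a b B := by
  refine ⟨fun hF => ?_, fun ⟨B, hB⟩ => ?_⟩
  · obtain ⟨A, B, C, h⟩ := exists_isGappedChain_of_F_ne_zero hF
    exact ⟨B, h.admissible⟩
  · obtain ⟨A, C, h⟩ := hB.exists_isGappedChain h12 h23
    exact h.F_ne_zero h12 h23

variable {B₀ B₁ : Finset X}

theorem Admissible.exists_succ_left (h₁ : Admissible z₁ z₂ z₃ a b B₁)
    (h₀ : Admissible z₁ z₂ z₃ (a + 1) (b + 1) B₀) : ∃ B, Admissible z₁ z₂ z₃ (a + 1) b B := by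
  by_cases hcard : #({y | y ≤ z₁} : Finset X) + (a + 1) ≤ #B₁
  · exact ⟨B₁, { h₁ with
      card_filter_gt_le := h₁.card_filter_gt_le.trans a.le_succ
      card_Iic_add_le := hcard }⟩
  have hlt : #B₁ < #B₀ := by have := h₀.card_Iic_add_le; omega
  obtain ⟨B, hB, hB₁B, hBB₀, hBcard⟩ := exists_isLowerSet_card_eq h₁.isLowerSet
    (by rw [coe_union]; exact h₁.isLowerSet.union h₀.isLowerSet) subset_union_left
    (m := #B₁ + 1) (by omega) (hlt.trans_le (card_le_card subset_union_right))
  have hnew : #(B \ B₁) = 1 := by rw [card_sdiff_of_subset hB₁B]; omega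
  refine ⟨B, hB, ⟨hB₁B h₁.maximal.1, fun y hy hzy => ?_⟩, ?_, ?_, ?_, ?_⟩
  · exact (mem_union.1 (hBB₀ hy)).elim (h₁.maximal.2 · hzy) (h₀.maximal.2 · hzy)
  · calc #{y ∈ B | z₁ < y} ≤ #({y ∈ B₁ | z₁ < y} ∪ (B \ B₁)) := card_le_card fun y hy => by
          simp only [mem_filter, mem_union, mem_sdiff] at hy ⊢
          tauto
      _ ≤ a + 1 := (card_union_le _ _).trans (by have := h₁.card_filter_gt_le; omega)
  · have := h₁.card_Iic_add_le; omega
  · have := h₀.card_add_le; omega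
  · exact (card_le_card (sdiff_subset_sdiff subset_rfl hB₁B)).trans h₁.card_Iic_sdiff_le

theorem Admissible.exists_succ_right (h₁ : Admissible z₁ z₂ z₃ a b B₁)
    (h₀ : Admissible z₁ z₂ z₃ (a + 1) (b + 1) B₀) : ∃ B, Admissible z₁ z₂ z₃ a (b + 1) B := by
  by_cases hcard : #B₁ + (b + 1) ≤ #({y | ¬ z₃ < y} : Finset X)
  · exact ⟨B₁, { h₁ with
      card_add_le := hcard
      card_Iic_sdiff_le := h₁.card_Iic_sdiff_le.trans b.le_succ }⟩
  have hlt : #B₀ < #B₁ := by have := h₀.card_add_le; omega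
  obtain ⟨B, hB, hB₁₀B, hBB₁, hBcard⟩ := exists_isLowerSet_card_eq
    (by rw [coe_inter]; exact h₁.isLowerSet.inter h₀.isLowerSet) h₁.isLowerSet inter_subset_left
    (m := #B₁ - 1) (by have := card_le_card (inter_subset_right (s₁ := B₁) (s₂ := B₀)); omega)
    (Nat.sub_le _ _)
  have hgone : #(B₁ \ B) = 1 := by rw [card_sdiff_of_subset hBB₁]; omega
  refine ⟨B, hB, ⟨hB₁₀B (mem_inter.2 ⟨h₁.maximal.1, h₀.maximal.1⟩),
    fun y hy hzy => h₁.maximal.2 (hBB₁ hy) hzy⟩, ?_, ?_, ?_, ?_⟩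
  · exact (card_le_card (filter_subset_filter _ hBB₁)).trans h₁.card_filter_gt_le
  · have := h₀.card_Iic_add_le; omega
  · have := h₁.card_add_le; omega
  · calc #(({y | y ≤ z₃} : Finset X) \ B)
        ≤ #((({y | y ≤ z₃} : Finset X) \ B₁) ∪ (B₁ \ B)) := card_le_card fun y hy => by
          simp only [mem_sdiff, mem_union] at hy ⊢
          tauto
      _ ≤ b + 1 := (card_union_le _ _).trans (by have := h₁.card_Iic_sdiff_le; omega)

end Admissible

theorem vanish_either_general (X : Type) [PartialOrder X] [Fintype X]
    (z₁ z₂ z₃ : X) (h12 : z₁ < z₂) (h23 : z₂ < z₃)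
    (k l : ℕ)
    (h0 : F X z₁ z₂ z₃ (k + 1) l * F X z₁ z₂ z₃ k (l + 1) = 0) :
    F X z₁ z₂ z₃ k l * F X z₁ z₂ z₃ (k + 1) (l + 1) = 0 := by
  classical
  rw [mul_eq_zero] at h0 ⊢
  by_contra! h
  obtain ⟨B₁, hB₁⟩ := (F_ne_zero_iff_exists_admissible h12 h23).1 h.1
  obtain ⟨B₀, hB₀⟩ := (F_ne_zero_iff_exists_admissible h12 h23).1 h.2
  rcases h0 with h0 | h0
  · exact (F_ne_zero_iff_exists_admissible h12 h23).2 (hB₁.exists_succ_left hB₀) h0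
  · exact (F_ne_zero_iff_exists_admissible h12 h23).2 (hB₁.exists_succ_right hB₀) h0

theorem vanish_either (X : Type) [PartialOrder X] [Fintype X]
    (z₁ z₂ z₃ : X) (h12 : z₁ < z₂) (h23 : z₂ < z₃)
    (k l : ℕ) (hk : 1 ≤ k) (hl : 1 ≤ l)
    (h0 : F X z₁ z₂ z₃ (k + 1) l * F X z₁ z₂ z₃ k (l + 1) = 0) :
    F X z₁ z₂ z₃ k l * F X z₁ z₂ z₃ (k + 1) (l + 1) = 0 :=
  vanish_either_general X z₁ z₂ z₃ h12 h23 k l h0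
end

section
/- Let P = (X,≺) be a finite poset with n elements, a ∈ X, and let N_k denote the number of linear extensions L with L(a) = k. If N_{k−1} > 0, then N_k ≤ (k−1)·N_{k−1}; and if N_{k+1} > 0, then N_k ≤ (n−k)·N_{k+1}. -/
/-!
Let `L` be a linear extension with `L a = k`. If `N_{k-1} > 0`, at most `k - 2`
elements lie below `a`, so some element at a position before `a` is not below `a`; let `x` be the
last one, at position `j`. Every element strictly between `x` and `a` lies below `a`, hence is not
above `x`, so moving `x` to just after `a` gives a linear extension with `a` at position `k - 1`.
Since `L` is recovered from this extension and `j < k`, we get `N_k ≤ (k - 1) N_{k-1}`. The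
second bound is the first one for the dual poset, which reverses all positions.
-/

/-- The number of linear extensions `L` of a finite poset `X`
(order-preserving bijections `X ≃ Fin (card X)`, positions taken in `{1, …, n}`)
with `L a = j`. -/
noncomputable def NE (X : Type) [PartialOrder X] [Fintype X] (a : X) (j : ℕ) : ℕ :=
  Nat.card {L : X ≃ Fin (Fintype.card X) // (∀ p q : X, p < q → L p < L q) ∧
    (L a : ℕ) + 1 = j}

open Finset

theorem Fin.val_cycleIcc {n : ℕ} {j K : Fin n} (hjK : j ≤ K) (u : Fin n) :
    (cycleIcc j K u : ℕ) = if u < j ∨ K < u then (u : ℕ) else if u = K then j else u + 1 := by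
  have : NeZero n := ⟨by omega⟩
  rcases lt_or_ge u j with h | h
  · simp [cycleIcc_of_lt h, h]
  rcases lt_or_ge K u with h' | h'
  · simp [cycleIcc_of_gt h', h']
  rw [cycleIcc_of_le_of_le h h']
  rcases eq_or_ne u K with rfl | hne
  · simp [not_lt.2 h]
  · have : (u : ℕ) + 1 < n := by
      have := K.isLt
      have := lt_def.1 (lt_of_le_of_ne h' hne)
      omega
    simp [hne, not_lt.2 h, not_lt.2 h', val_add_one_of_lt' this]

theorem Fin.val_cycleIcc_symm_right {n : ℕ} {j K : Fin n} (hjK : j < K) :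
    ((cycleIcc j K).symm K : ℕ) = K - 1 := by
  have hK : (K : ℕ) - 1 < n := by omega
  suffices (cycleIcc j K).symm K = ⟨K - 1, hK⟩ from congrArg val this
  rw [Equiv.symm_apply_eq, Fin.ext_iff, val_cycleIcc hjK.le]
  have := lt_def.1 hjK
  simp only [lt_def, Fin.ext_iff]
  split_ifs <;> omega

section Positions

variable {X : Type*} [PartialOrder X] {n : ℕ}

theorem ncard_setOf_lt_le {L : X ≃ Fin n} (hL : StrictMono L) (a : X) :
    {x | x < a}.ncard ≤ L a := by
  calc {x | x < a}.ncard = (L '' {x | x < a}).ncard :=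
        (Set.ncard_image_of_injective _ L.injective).symm
    _ ≤ (Set.Iio (L a)).ncard := Set.ncard_le_ncard (by rintro _ ⟨x, hx, rfl⟩; exact hL hx)
    _ = L a := by simp [← Finset.coe_Iio, Set.ncard_coe_finset]

theorem exists_last_position_not_lt (L : X ≃ Fin n) {a : X} (h : {x | x < a}.ncard < L a) :
    ∃ j < L a, ¬ L.symm j < a ∧ ∀ p, j < p → p < L a → L.symm p < a := by
  set S : Set (Fin n) := {p | p < L a ∧ ¬ L.symm p < a}
  have hS : S.Nonempty := by
    by_contra hS
    have hsub : Set.Iio (L a) ⊆ L '' {x | x < a} := fun p hp =>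
      ⟨L.symm p, not_not.1 fun hpa => hS ⟨p, hp, hpa⟩, L.apply_symm_apply p⟩
    have := Set.ncard_le_ncard hsub
    rw [Set.ncard_image_of_injective _ L.injective, ← Finset.coe_Iio, Set.ncard_coe_finset,
      Fin.card_Iio] at this
    omega
  obtain ⟨j, ⟨hj, hja⟩, hmax⟩ := S.exists_max_image id S.toFinite hS
  exact ⟨j, hj, hja, fun p hjp hp => not_not.1 fun hpa => (hmax p ⟨hp, hpa⟩).not_gt hjp⟩

theorem strictMono_trans_cycleIcc_symm {L : X ≃ Fin n} (hL : StrictMono L) {a : X}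
    {j : Fin n} (hj : j < L a) (hja : ¬ L.symm j < a)
    (hmax : ∀ p, j < p → p < L a → L.symm p < a) :
    StrictMono (L.trans (Fin.cycleIcc j (L a)).symm) := by
  intro p q hpq
  by_contra hqp
  have hu := Fin.val_cycleIcc hj.le ((Fin.cycleIcc j (L a)).symm (L p))
  have hv := Fin.val_cycleIcc hj.le ((Fin.cycleIcc j (L a)).symm (L q))
  rw [Equiv.apply_symm_apply] at hu hv
  have hLpq := Fin.lt_def.1 (hL hpq)
  have hj' := Fin.lt_def.1 hj
  simp only [Equiv.trans_apply, not_lt, Fin.le_def] at hqp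
  simp only [Fin.lt_def, Fin.ext_iff] at hu hv
  -- `cycleIcc j (L a)` only reverses the order of pairs whose larger element is `L a`
  obtain ⟨hpj, hjq, hqa⟩ : L p = j ∧ j < L q ∧ L q ≤ L a := by
    simp only [Fin.ext_iff, Fin.lt_def, Fin.le_def]
    split_ifs at hu hv <;> omega
  have hq : q ≤ a := by
    rcases hqa.lt_or_eq with hlt | heq
    · simpa using (hmax _ hjq hlt).le
    · exact (L.injective heq).le
  exact hja (by simpa [← hpj] using hpq.trans_le hq)

end Positions

section Counting

variable {X : Type*} [PartialOrder X] [Fintype X]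

/-- Linear extensions with `a` at the `0`-indexed position `i`; `NE X a (i + 1)` counts them. -/
def linearExtensionsAt (a : X) (i : ℕ) : Set (X ≃ Fin (Fintype.card X)) :=
  {L | StrictMono L ∧ (L a : ℕ) = i}

theorem ncard_linearExtensionsAt_succ_le {a : X} {i : ℕ} (h : {x | x < a}.ncard ≤ i) :
    (linearExtensionsAt a (i + 1)).ncard ≤ (i + 1) * (linearExtensionsAt a i).ncard := by
  rcases (linearExtensionsAt a (i + 1)).eq_empty_or_nonempty with h0 | ⟨L₀, -, hL₀⟩
  · simp [h0]
  obtain ⟨K, hK⟩ : ∃ K : Fin (Fintype.card X), (K : ℕ) = i + 1 := ⟨L₀ a, hL₀⟩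
  have hcover : linearExtensionsAt a (i + 1) ⊆
      ⋃ j ∈ Iio K, (fun M => M.trans (Fin.cycleIcc j K)) '' linearExtensionsAt a i := by
    rintro L ⟨hL, hLa⟩
    obtain rfl : L a = K := Fin.ext (hLa.trans hK.symm)
    obtain ⟨j, hj, hja, hmax⟩ := exists_last_position_not_lt L (a := a) (by omega)
    refine Set.mem_biUnion (x := j) (by simpa using hj)
      ⟨L.trans (Fin.cycleIcc j (L a)).symm, ⟨strictMono_trans_cycleIcc_symm hL hj hja hmax, ?_⟩,
        by ext; simp⟩
    simp [Fin.val_cycleIcc_symm_right hj, hLa]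
  calc (linearExtensionsAt a (i + 1)).ncard
      ≤ ∑ j ∈ Iio K, ((fun M => M.trans (Fin.cycleIcc j K)) '' linearExtensionsAt a i).ncard :=
        (Set.ncard_le_ncard hcover).trans (Finset.set_ncard_biUnion_le _ _)
    _ ≤ ∑ j ∈ Iio K, (linearExtensionsAt a i).ncard := sum_le_sum fun _ _ => Set.ncard_image_le
    _ = (i + 1) * (linearExtensionsAt a i).ncard := by simp [Fin.card_Iio, hK]

end Counting

theorem NE_zero (X : Type) [PartialOrder X] [Fintype X] (a : X) : NE X a 0 = 0 := by
  simp [NE]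

theorem NE_succ (X : Type) [PartialOrder X] [Fintype X] (a : X) (i : ℕ) :
    NE X a (i + 1) = (linearExtensionsAt a i).ncard := by
  rw [NE, ← Nat.card_coe_set_eq]
  exact Nat.card_congr (Equiv.subtypeEquivRight fun L => by simp [linearExtensionsAt, StrictMono])

theorem NE_le_mul_NE_sub_one (X : Type) [PartialOrder X] [Fintype X] (a : X) (k : ℕ)
    (h : 0 < NE X a (k - 1)) : NE X a k ≤ (k - 1) * NE X a (k - 1) := by
  obtain _ | _ | i := k
  · simp [NE_zero] at h
  · simp [NE_zero] at h
  rw [show i + 2 - 1 = i + 1 by omega, NE_succ] at h ⊢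
  rw [NE_succ]
  obtain ⟨M, hM, hMa⟩ := Set.nonempty_of_ncard_ne_zero h.ne'
  exact ncard_linearExtensionsAt_succ_le (hMa ▸ ncard_setOf_lt_le hM a)

theorem NE_eq_NE_orderDual (X : Type) [PartialOrder X] [Fintype X] (a : X) (j : ℕ) :
    NE X a j = NE Xᵒᵈ (OrderDual.toDual a) (Fintype.card X + 1 - j) := by
  refine Nat.card_congr
    (Equiv.subtypeEquiv (Equiv.equivCongr OrderDual.toDual Fin.revPerm) fun L => ?_)
  have hrev : ((L a).rev : ℕ) = Fintype.card X - 1 - L a := by rw [Fin.val_rev]; omega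
  have hlt := (L a).isLt
  refine and_congr ⟨fun hL p q hpq => Fin.rev_lt_rev.2 (hL _ _ hpq),
    fun hL p q hpq => Fin.rev_lt_rev.1 (hL (OrderDual.toDual q) (OrderDual.toDual p) hpq)⟩ ?_
  change _ ↔ ((L a).rev : ℕ) + 1 = _
  omega

theorem single_element_ratio_bounds_general (X : Type) [PartialOrder X] [Fintype X]
    (n : ℕ) (hn : Fintype.card X = n) (a : X) (k : ℕ) :
    (0 < NE X a (k - 1) → NE X a k ≤ (k - 1) * NE X a (k - 1)) ∧
    (0 < NE X a (k + 1) → NE X a k ≤ (n - k) * NE X a (k + 1)) := by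
  refine ⟨NE_le_mul_NE_sub_one X a k, fun h => ?_⟩
  have hk : NE X a k = NE Xᵒᵈ (OrderDual.toDual a) (n + 1 - k) := by
    rw [NE_eq_NE_orderDual, hn]
  have hk1 : NE X a (k + 1) = NE Xᵒᵈ (OrderDual.toDual a) (n + 1 - k - 1) := by
    rw [NE_eq_NE_orderDual, hn]
    congr 1
  rw [hk1] at h ⊢
  rw [hk, show n - k = n + 1 - k - 1 by omega]
  exact NE_le_mul_NE_sub_one Xᵒᵈ (OrderDual.toDual a) (n + 1 - k) h

theorem single_element_ratio_bounds (X : Type) [PartialOrder X] [Fintype X]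
    (n : ℕ) (hn : Fintype.card X = n) (a : X) (k : ℕ) (hk : 1 ≤ k) :
    (0 < NE X a (k - 1) → NE X a k ≤ (k - 1) * NE X a (k - 1)) ∧
    (0 < NE X a (k + 1) → NE X a k ≤ (n - k) * NE X a (k + 1)) :=
  single_element_ratio_bounds_general X n hn a k
end

section
/- Let P = (X,≺) be a finite poset with n elements and z₁ ≺ z₂ ≺ z₃ distinct. If F(k,ℓ) > 0, then F(k+1,ℓ) ≤ 2kℓ·F(k,ℓ). -/
lemma Nat.card_subtype_le_card_mul {α β γ : Type*} [Finite α] [Finite β] {p : γ → Prop}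
    {q : β → Prop} (f : β → α → γ) (h : ∀ c, p c → ∃ b a, q b ∧ f b a = c) :
    Nat.card {c // p c} ≤ Nat.card {b // q b} * Nat.card α := by
  choose g a hq hf using h
  rw [← Nat.card_prod]
  refine Nat.card_le_card_of_injective (fun c => (⟨g c c.2, hq c c.2⟩, a c c.2)) fun c c' e => ?_
  simp only [Prod.mk.injEq, Subtype.mk.injEq] at e
  exact Subtype.ext <| by rw [← hf c c.2, ← hf c' c'.2, e.1, e.2]

namespace LinearExtension

/-- Where the entry at position `j` ends up when the entry at position `s` is taken out and
reinserted at position `t`. -/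
def moveFun (s t j : ℕ) : ℕ :=
  if j = s then t else if s < j ∧ j ≤ t then j - 1 else if t ≤ j ∧ j < s then j + 1 else j

lemma moveFun_lt {n s t j : ℕ} (hs : s < n) (ht : t < n) (hj : j < n) : moveFun s t j < n := by
  unfold moveFun; split_ifs <;> omega

lemma moveFun_moveFun (s t u j : ℕ) : moveFun t u (moveFun s t j) = moveFun s u j := by
  unfold moveFun; split_ifs <;> omega

lemma moveFun_self (s j : ℕ) : moveFun s s j = j := by
  unfold moveFun; split_ifs <;> omega

/-- The identity unless both `s` and `t` are positions in `Fin n`. -/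
def finMove {n : ℕ} (s t : ℕ) : Equiv.Perm (Fin n) where
  toFun j := if h : s < n ∧ t < n then ⟨moveFun s t j, moveFun_lt h.1 h.2 j.2⟩ else j
  invFun j := if h : t < n ∧ s < n then ⟨moveFun t s j, moveFun_lt h.1 h.2 j.2⟩ else j
  left_inv j := by
    by_cases h : s < n ∧ t < n
    · simp [h, moveFun_moveFun, moveFun_self]
    · simp [h, show ¬(t < n ∧ s < n) by tauto]
  right_inv j := by
    by_cases h : t < n ∧ s < n
    · simp [h, moveFun_moveFun, moveFun_self]
    · simp [h, show ¬(s < n ∧ t < n) by tauto]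

variable {n : ℕ}

lemma finMove_apply_val {s t : ℕ} (hs : s < n) (ht : t < n) (j : Fin n) :
    (finMove s t j : ℕ) = moveFun s t j := by
  simp [finMove, hs, ht]

lemma finMove_trans_finMove {s t u : ℕ} (hs : s < n) (ht : t < n) (hu : u < n) :
    (finMove s t).trans (finMove t u) = finMove (n := n) s u := by
  ext j
  simp [finMove_apply_val, hs, ht, hu, moveFun_moveFun]

lemma finMove_self (s : ℕ) : finMove (n := n) s s = Equiv.refl _ := by
  ext j
  simp [finMove, moveFun_self]

variable {X : Type}

def relocate (L : X ≃ Fin n) (x : X) (t : ℕ) : X ≃ Fin n := L.trans (finMove (L x) t)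

lemma relocate_apply_val (L : X ≃ Fin n) (x : X) {t : ℕ} (ht : t < n) (w : X) :
    (relocate L x t w : ℕ) = moveFun (L x) t (L w) :=
  finMove_apply_val (L x).2 ht _

lemma relocate_trans_finMove (L : X ≃ Fin n) (x : X) {t : ℕ} (ht : t < n) :
    (relocate L x t).trans (finMove t (L x)) = L := by
  rw [relocate, Equiv.trans_assoc, finMove_trans_finMove (L x).2 ht (L x).2, finMove_self,
    Equiv.trans_refl]

lemma relocate_apply_self (L : X ≃ Fin n) (x : X) (t : Fin n) : relocate L x t x = t :=
  Fin.ext <| by rw [relocate_apply_val L x t.2]; simp [moveFun]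

lemma relocate_relocate_self (L : X ≃ Fin n) (x : X) {s t : ℕ} (hs : s < n) (ht : t < n) :
    relocate (relocate L x s) x t = relocate L x t := by
  rw [relocate, relocate_apply_self L x ⟨s, hs⟩, relocate, Equiv.trans_assoc,
    finMove_trans_finMove (L x).2 hs ht]
  rfl

lemma relocate_relocate_trans_finMove (L : X ≃ Fin n) (x y : X) {a b : ℕ} (ha : a < n)
    (hb : b < n) :
    ((relocate (relocate L x a) y b).trans (finMove b (relocate L x a y))).trans
      (finMove a (L x)) = L := by
  rw [relocate_trans_finMove _ _ hb, relocate_trans_finMove _ _ ha]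

variable [Preorder X]

def CanMoveDown (L : X ≃ Fin n) (x : X) (t : ℕ) : Prop :=
  ∀ w, t ≤ (L w : ℕ) → L w < L x → ¬ w < x

def CanMoveUp (L : X ≃ Fin n) (x : X) (t : ℕ) : Prop :=
  ∀ w, L x < L w → (L w : ℕ) ≤ t → ¬ x < w

lemma relocate_strictMono {L : X ≃ Fin n} (hL : StrictMono L) {x : X} {t : ℕ} (ht : t < n)
    (hdown : CanMoveDown L x t) (hup : CanMoveUp L x t) : StrictMono (relocate L x t) := by
  intro a b hab
  rw [Fin.lt_def, relocate_apply_val L x ht, relocate_apply_val L x ht]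
  have hLab : (L a : ℕ) < L b := hL hab
  by_cases hax : a = x
  · subst hax
    have : ¬ (L b : ℕ) ≤ t := fun h => hup b hLab h hab
    unfold moveFun; split_ifs <;> omega
  by_cases hbx : b = x
  · subst hbx
    have : ¬ t ≤ (L a : ℕ) := fun h => hdown a h hLab hab
    unfold moveFun; split_ifs <;> omega
  have hLax : (L a : ℕ) ≠ L x := fun h => hax (L.injective (Fin.ext h))
  have hLbx : (L b : ℕ) ≠ L x := fun h => hbx (L.injective (Fin.ext h))
  unfold moveFun; split_ifs <;> omega

lemma _root_.StrictMono.relocate_of_canMoveDown {L : X ≃ Fin n} (hL : StrictMono L) {x : X}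
    {t : ℕ} (ht : t ≤ L x) (h : CanMoveDown L x t) : StrictMono (relocate L x t) :=
  relocate_strictMono hL (by omega) h fun _ hw hwt => by rw [Fin.lt_def] at hw; omega

lemma _root_.StrictMono.relocate_of_canMoveUp {L : X ≃ Fin n} (hL : StrictMono L) {x : X}
    {t : ℕ} (ht : L x ≤ t) (htn : t < n) (h : CanMoveUp L x t) : StrictMono (relocate L x t) :=
  relocate_strictMono hL htn (fun _ hw hwx => by rw [Fin.lt_def] at hwx; omega) h

lemma CanMoveDown.relocate {L : X ≃ Fin n} {x y : X} {P t : ℕ} (h : CanMoveDown L y P)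
    (hxP : P ≤ L x) (htP : P ≤ t) (hxy : L x < L y) (hty : t < L y) :
    CanMoveDown (relocate L x t) y P := by
  have ht : t < n := hty.trans (L y).2
  intro w hw1 hw2
  rw [Fin.lt_def, relocate_apply_val L x ht, relocate_apply_val L x ht] at hw2
  rw [relocate_apply_val L x ht] at hw1
  rw [Fin.lt_def] at hxy
  refine h w ?_ ?_ <;> (try rw [Fin.lt_def]) <;> unfold moveFun at hw1 hw2 <;>
    split_ifs at hw1 hw2 <;> omega

lemma CanMoveUp.relocate {L : X ≃ Fin n} {x y : X} {Q t : ℕ} (h : CanMoveUp L y Q)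
    (hxy : L x < L y) (hty : t < L y) : CanMoveUp (relocate L x t) y Q := by
  have ht : t < n := hty.trans (L y).2
  intro w hw1 hw2
  rw [Fin.lt_def, relocate_apply_val L x ht, relocate_apply_val L x ht] at hw1
  rw [relocate_apply_val L x ht] at hw2
  rw [Fin.lt_def] at hxy
  refine h w ?_ ?_ <;> (try rw [Fin.lt_def]) <;> unfold moveFun at hw1 hw2 <;>
    split_ifs at hw1 hw2 <;> omega

lemma lt_of_forall_not_canMoveDown {L : X ≃ Fin n} {u : X} {Q : ℕ}
    (h : ∀ v, L u < L v → (L v : ℕ) < Q → ¬ CanMoveDown L v (L u)) :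
    ∀ v, L u < L v → (L v : ℕ) < Q → u < v := by
  intro v
  induction hm : (L v : ℕ) using Nat.strong_induction_on generalizing v with
  | _ m IH =>
    intro huv hvQ
    obtain ⟨w, huw, hwv, hlt⟩ : ∃ w, (L u : ℕ) ≤ L w ∧ L w < L v ∧ w < v := by
      simpa [CanMoveDown] using h v huv (by omega)
    rcases huw.eq_or_lt with heq | huw
    · rwa [L.injective (Fin.ext heq)]
    · exact (IH _ (hm ▸ hwv) w rfl huw (by omega)).trans hlt

lemma lt_of_forall_not_canMoveUp {L : X ≃ Fin n} {u : X} {P : ℕ}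
    (h : ∀ v, P < (L v : ℕ) → L v < L u → ¬ CanMoveUp L v (L u)) :
    ∀ v, P < (L v : ℕ) → L v < L u → v < u := by
  intro v
  induction hm : (L u : ℕ) - L v using Nat.strong_induction_on generalizing v with
  | _ m IH =>
    intro hPv hvu
    obtain ⟨w, hvw, hwu, hlt⟩ : ∃ w, L v < L w ∧ (L w : ℕ) ≤ L u ∧ v < w := by
      simpa [CanMoveUp] using h v hPv hvu
    rcases hwu.eq_or_lt with heq | hwu
    · rwa [← L.injective (Fin.ext heq)]
    · rw [Fin.lt_def] at hvw
      exact hlt.trans (IH _ (by omega) w rfl (by omega) hwu)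

lemma sub_le_sub_of_forall_between {L E : X ≃ Fin n} (hE : StrictMono E) {a b : X} (hab : a < b)
    (h : ∀ v, L a < L v → L v < L b → a < v ∧ v < b) : (L b : ℕ) - L a ≤ E b - E a := by
  have hcard : (L b : ℕ) - L a - 1 ≤ E b - E a - 1 := by
    rw [← Fin.card_Ioo, ← Fin.card_Ioo]
    refine Finset.card_le_card_of_injOn (fun q => E (L.symm q)) (fun q hq => ?_) ?_
    · obtain ⟨hav, hvb⟩ := h (L.symm q) (by simpa using (Finset.mem_Ioo.1 hq).1)
        (by simpa using (Finset.mem_Ioo.1 hq).2)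
      exact Finset.mem_Ioo.2 ⟨hE hav, hE hvb⟩
    · intro q _ r _ hqr
      simpa using hqr
  have := Fin.lt_def.1 (hE hab)
  omega

lemma exists_canMove_of_sub_lt {L E : X ≃ Fin n} (hE : StrictMono E) {a b : X} (hab : a < b)
    (hgap : (E b : ℕ) - E a < L b - L a) :
    ∃ v, L a < L v ∧ L v < L b ∧ (CanMoveDown L v (L a) ∨ CanMoveUp L v (L b)) := by
  by_contra! h
  have := sub_le_sub_of_forall_between hE hab fun v hav hvb =>
    ⟨lt_of_forall_not_canMoveDown (fun w haw hwb => (h w haw hwb).1) v hav hvb,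
      lt_of_forall_not_canMoveUp (fun w haw hwb => (h w (Fin.lt_def.2 haw) hwb).2) v hav hvb⟩
  omega

def IsLinExtWithGaps (z₁ z₂ z₃ : X) (k l : ℕ) (L : X ≃ Fin n) : Prop :=
  StrictMono L ∧ (L z₂ : ℕ) = L z₁ + k ∧ (L z₃ : ℕ) = L z₂ + l

/-- Undoes `relocate (relocate L x (L z₂)) y b` for `b = L z₁` (`up = false`) or `b = L z₃`
(`up = true`), given `i = L x - L z₁ - 1` and `j = relocate L x (L z₂) y - L z₂`;
`p` recovers `L z₁`. -/
def restore (z₁ : X) (k l : ℕ) (E : X ≃ Fin n) : Bool × Fin k × Fin l → X ≃ Fin n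
  | (up, i, j) =>
    let p := if up then (E z₁ : ℕ) else E z₁ - 1
    (E.trans (finMove (if up then p + k + l + 1 else p) (p + k + 1 + j))).trans
      (finMove (p + k + 1) (p + 1 + i))

lemma exists_restore_eq {L : X ≃ Fin n} {z₁ z₂ z₃ x y : X} {k l b : ℕ}
    (h2 : (L z₂ : ℕ) = L z₁ + (k + 1)) (h3 : (L z₃ : ℕ) = L z₂ + l)
    (hx₁ : L z₁ < L x) (hx₂ : L x < L z₂)
    (hy₂ : L z₂ ≤ relocate L x (L z₂) y) (hy₃ : relocate L x (L z₂) y < L z₃)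
    (hb : b = L z₁ ∨ b = L z₃) (hE : StrictMono (relocate (relocate L x (L z₂)) y b)) :
    ∃ E tag, IsLinExtWithGaps z₁ z₂ z₃ k l E ∧ restore z₁ k l E tag = L := by
  set L' := relocate L x (L z₂)
  rw [Fin.lt_def] at hx₁ hx₂ hy₃
  rw [Fin.le_def] at hy₂
  have hb' : b < n := by have := (L z₃).2; omega
  have hL' : ∀ w, (L' w : ℕ) = moveFun (L x) (L z₂) (L w) := relocate_apply_val _ _ (L z₂).2
  have hz₁' : (L' z₁ : ℕ) = L z₁ := by rw [hL']; unfold moveFun; split_ifs <;> omega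
  have hz₂' : (L' z₂ : ℕ) = L z₂ - 1 := by rw [hL']; unfold moveFun; split_ifs <;> omega
  have hz₃' : (L' z₃ : ℕ) = L z₃ := by rw [hL']; unfold moveFun; split_ifs <;> omega
  have hE' : ∀ w, (relocate L' y b w : ℕ) = moveFun (L' y) b (L' w) := relocate_apply_val _ _ hb'
  have hz₁ : (relocate L' y b z₁ : ℕ) = if b = L z₃ then (L z₁ : ℕ) else L z₁ + 1 := by
    rw [hE', hz₁']; unfold moveFun; split_ifs <;> omega
  have hz₂ : (relocate L' y b z₂ : ℕ) = if b = L z₃ then (L z₂ : ℕ) - 1 else L z₂ := by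
    rw [hE', hz₂']; unfold moveFun; split_ifs <;> omega
  have hz₃ : (relocate L' y b z₃ : ℕ) = if b = L z₃ then (L z₃ : ℕ) - 1 else L z₃ := by
    rw [hE', hz₃']; unfold moveFun; split_ifs <;> omega
  refine ⟨_, (decide (b = L z₃), ⟨L x - L z₁ - 1, by omega⟩, ⟨L' y - L z₂, by omega⟩),
    ⟨hE, ?_, ?_⟩, ?_⟩
  · rw [hz₁, hz₂]; split_ifs <;> omega
  · rw [hz₂, hz₃]; split_ifs <;> omega
  · calc restore z₁ k l _ _
        = ((relocate L' y b).trans (finMove b (L' y))).trans (finMove (L z₂) (L x)) := by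
          simp only [restore, hz₁, decide_eq_true_eq]
          congr 3 <;> split_ifs <;> omega
      _ = L := relocate_relocate_trans_finMove L x y (L z₂).2 hb'

lemma _root_.StrictMono.exists_relocate {L : X ≃ Fin n} (hL : StrictMono L) {y : X} {P Q : ℕ}
    (hP : P ≤ L y) (hQ : L y ≤ Q) (hQn : Q < n) (h : CanMoveDown L y P ∨ CanMoveUp L y Q) :
    ∃ b, (b = P ∨ b = Q) ∧ StrictMono (relocate L y b) :=
  h.elim (fun h => ⟨P, .inl rfl, hL.relocate_of_canMoveDown hP h⟩)
    fun h => ⟨Q, .inr rfl, hL.relocate_of_canMoveUp hQ hQn h⟩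

lemma exists_restore_eq_of_isLinExtWithGaps {L E₀ : X ≃ Fin n} {z₁ z₂ z₃ : X} {k l : ℕ}
    (h12 : z₁ < z₂) (h23 : z₂ < z₃) (hL : IsLinExtWithGaps z₁ z₂ z₃ (k + 1) l L)
    (hE₀ : IsLinExtWithGaps z₁ z₂ z₃ k l E₀) :
    ∃ E tag, IsLinExtWithGaps z₁ z₂ z₃ k l E ∧ restore z₁ k l E tag = L := by
  obtain ⟨hL, h2, h3⟩ := hL
  obtain ⟨hE₀, hE₀2, hE₀3⟩ := hE₀
  have hz₃ : (L z₃ : ℕ) < n := (L z₃).2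
  have h12' : L z₁ < L z₂ := hL h12
  have h23' : L z₂ < L z₃ := hL h23
  obtain ⟨x, hx₁, hx₂, hx⟩ := exists_canMove_of_sub_lt (L := L) hE₀ h12 (by omega)
  rcases hx with hx | hx
  · refine exists_restore_eq (y := x) h2 h3 hx₁ hx₂ ?_ ?_ (.inl rfl) ?_
    · rw [relocate_apply_self]
    · rwa [relocate_apply_self]
    · rw [relocate_relocate_self _ _ (L z₂).2 (L z₁).2]
      exact hL.relocate_of_canMoveDown hx₁.le hx
  obtain ⟨y, hy₁, hy₃, hy⟩ := exists_canMove_of_sub_lt (L := L) hE₀ (h12.trans h23) (by omega)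
  rcases lt_trichotomy (L y) (L z₂) with hy₂ | hy₂ | hy₂
  · obtain ⟨b, hb, hmono⟩ := hL.exists_relocate hy₁.le hy₃.le hz₃ hy
    refine exists_restore_eq (y := y) h2 h3 hy₁ hy₂ ?_ ?_ hb ?_
    · rw [relocate_apply_self]
    · rwa [relocate_apply_self]
    · rwa [relocate_relocate_self _ _ (L z₂).2 (by omega)]
  · rw [L.injective hy₂] at hy
    exact absurd hy (not_or.2 ⟨fun h => h z₁ le_rfl h12' h12, fun h => h z₃ h23' le_rfl h23⟩)
  · set L' := relocate L x (L z₂)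
    have hLy : L' y = L y := Fin.ext <| by
      rw [relocate_apply_val _ _ (L z₂).2]; unfold moveFun; split_ifs <;> omega
    have hy' : CanMoveDown L' y (L z₁) ∨ CanMoveUp L' y (L z₃) :=
      hy.imp (fun h => h.relocate hx₁.le h12'.le (hx₂.trans hy₂) hy₂)
        fun h => h.relocate (hx₂.trans hy₂) hy₂
    obtain ⟨b, hb, hmono⟩ := (hL.relocate_of_canMoveUp hx₂.le (L z₂).2 hx).exists_relocate
      (hLy ▸ hy₁.le) (hLy ▸ hy₃.le) hz₃ hy'
    exact exists_restore_eq h2 h3 hx₁ hx₂ (hLy ▸ hy₂.le) (hLy ▸ hy₃) hb hmono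

end LinearExtension

theorem ratio_bound_up_k_general (X : Type) [PartialOrder X] [Fintype X]
    (z₁ z₂ z₃ : X) (h12 : z₁ < z₂) (h23 : z₂ < z₃)
    (k l : ℕ)
    (hpos : 0 < F X z₁ z₂ z₃ k l) :
    F X z₁ z₂ z₃ (k + 1) l ≤ 2 * k * l * F X z₁ z₂ z₃ k l := by
  obtain ⟨⟨E₀, hE₀⟩⟩ := (Nat.card_pos_iff.1 hpos).1
  calc F X z₁ z₂ z₃ (k + 1) l
      ≤ F X z₁ z₂ z₃ k l * Nat.card (Bool × Fin k × Fin l) :=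
        Nat.card_subtype_le_card_mul (LinearExtension.restore z₁ k l) fun _ hL =>
          LinearExtension.exists_restore_eq_of_isLinExtWithGaps h12 h23 hL hE₀
    _ = 2 * k * l * F X z₁ z₂ z₃ k l := by simp; ring

theorem ratio_bound_up_k (X : Type) [PartialOrder X] [Fintype X]
    (z₁ z₂ z₃ : X) (h12 : z₁ < z₂) (h23 : z₂ < z₃)
    (k l : ℕ) (hk : 1 ≤ k) (hl : 1 ≤ l)
    (hpos : 0 < F X z₁ z₂ z₃ k l) :
    F X z₁ z₂ z₃ (k + 1) l ≤ 2 * k * l * F X z₁ z₂ z₃ k l :=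
  ratio_bound_up_k_general X z₁ z₂ z₃ h12 h23 k l hpos
end

section
/- Fix k ≥ 1 and ℓ ≥ 2, and let P = (X,≺) be the poset with X = {x₁,…,x_{k−1}} ⊔ {y₁,…,y_{ℓ−2}} ⊔ {z₁,z₂,z₃} ⊔ {u,v,w}, with chain z₁ ≺ x₁ ≺ ⋯ ≺ x_{k−1} ≺ z₂ ≺ y₁ ≺ ⋯ ≺ y_{ℓ−2} ≺ z₃, and additional relations x_{k−1} ≺ u ≺ y₁, z₂ ≺ v, z₂ ≺ w. Then F(k,ℓ+2) = (ℓ+1)ℓ, F(k+1,ℓ) = 2(ℓ−1), F(k,ℓ+1) = 2ℓ, F(k+1,ℓ+1) = ℓ(ℓ−1), and consequently F(k,ℓ+1)·F(k+1,ℓ+1) < F(k,ℓ+2)·F(k+1,ℓ), i.e. the inequality (CPC2) F(k,ℓ+2)·F(k+1,ℓ) ≤ F(k,ℓ+1)·F(k+1,ℓ+1) fails. -/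
open Finset

namespace CPC2

lemma count_notMem_add_card_filter_lt (A : Finset ℕ) (x : ℕ) :
    Nat.count (· ∉ A) x + #{y ∈ A | y < x} = x := by
  have h : #{y ∈ A | y < x} = #{y ∈ range x | y ∈ A} := by
    congr 1; ext y; simp [and_comm]
  rw [Nat.count_eq_card_filter_range, h, add_comm, card_filter_add_card_filter_not, card_range]

lemma natCard_eq_card_of_proj {Q : ℕ → ℕ → ℕ → Prop} {S : Finset (ℕ × ℕ)}
    (hmem : ∀ a b d, Q a b d → (b, d) ∈ S)
    (hunique : ∀ a a' b d, Q a b d → Q a' b d → a = a')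
    (hex : ∀ b d, (b, d) ∈ S → ∃ a, Q a b d) :
    Nat.card {t : ℕ × ℕ × ℕ // Q t.1 t.2.1 t.2.2} = #S := by
  rw [← Nat.card_eq_finsetCard]
  refine Nat.card_congr (Equiv.ofBijective
    (fun t => ⟨(t.1.2.1, t.1.2.2), hmem _ _ _ t.2⟩) ⟨?_, ?_⟩)
  · rintro ⟨⟨a, b, d⟩, h⟩ ⟨⟨a', b', d'⟩, h'⟩ e
    simp only [Subtype.mk.injEq, Prod.mk.injEq] at e
    obtain ⟨rfl, rfl⟩ := e
    obtain rfl := hunique _ _ _ _ h h'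
    rfl
  · rintro ⟨⟨b, d⟩, hbd⟩
    obtain ⟨a, ha⟩ := hex b d hbd
    exact ⟨⟨(a, b, d), ha⟩, rfl⟩

lemma card_product_singleton_union {α : Type*} [DecidableEq α] {s : Finset α} {x : α}
    (hx : x ∉ s) : #(s ×ˢ {x} ∪ {x} ×ˢ s) = 2 * #s := by
  rw [card_union_of_disjoint, card_product, card_product, card_singleton]
  · ring
  · rw [disjoint_left]
    simp only [mem_product, mem_singleton]
    rintro ⟨y, z⟩ ⟨hy, -⟩ ⟨rfl, -⟩
    exact hx hy

lemma exists_eq_add_ite (s b d : ℕ) :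
    ∃ a, a ≠ b ∧ a ≠ d ∧ a = s + ((if b < a then 1 else 0) + (if d < a then 1 else 0)) := by
  by_contra! h
  have h₀ := h s; have h₁ := h (s + 1); have h₂ := h (s + 2)
  split_ifs at h₀ h₁ h₂ <;> omega

lemma eq_of_eq_add_ite {s b d a a' : ℕ} (hbd : b ≠ d) (hab : a ≠ b) (had : a ≠ d)
    (ha'b : a' ≠ b) (ha'd : a' ≠ d)
    (ha : a = s + ((if b < a then 1 else 0) + (if d < a then 1 else 0)))
    (ha' : a' = s + ((if b < a' then 1 else 0) + (if d < a' then 1 else 0))) : a = a' := by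
  split_ifs at ha ha' <;> omega

/-- With `u, v, w` at positions `a, b, d`, `Nat.count (free a b d) x` is the number of chain
elements placed before position `x`. -/
abbrev free (a b d x : ℕ) : Prop := x ∉ ({a, b, d} : Finset ℕ)

def below (a b d x : ℕ) : ℕ :=
  (if a < x then 1 else 0) + (if b < x then 1 else 0) + (if d < x then 1 else 0)

lemma free_infinite (a b d : ℕ) : (Set.ofPred (free a b d)).Infinite :=
  ({a, b, d} : Finset ℕ).finite_toSet.infinite_compl

lemma count_free_add_below {a b d : ℕ} (hab : a ≠ b) (had : a ≠ d) (hbd : b ≠ d) (x : ℕ) :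
    Nat.count (free a b d) x + below a b d x = x := by
  have h := count_notMem_add_card_filter_lt {a, b, d} x
  rw [card_filter, sum_insert (by simp [hab, had]), sum_insert (by simp [hbd]), sum_singleton] at h
  change Nat.count (· ∉ ({a, b, d} : Finset ℕ)) x + _ = x
  simp only [below]
  omega

def ChainAt (a b d i x : ℕ) : Prop := free a b d x ∧ Nat.count (free a b d) x = i

lemma ChainAt.eq {a b d i x y : ℕ} (hx : ChainAt a b d i x) (hy : ChainAt a b d i y) : x = y :=
  Nat.count_injective hx.1 hy.1 (hx.2.trans hy.2.symm)

structure Admissible (k l a b d : ℕ) : Prop where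
  a_ne_b : a ≠ b
  a_ne_d : a ≠ d
  b_ne_d : b ≠ d
  a_lt : a < k + l + 3
  b_lt : b < k + l + 3
  d_lt : d < k + l + 3
  le_count_a : k ≤ Nat.count (free a b d) a
  count_a_le : Nat.count (free a b d) a ≤ k + 1
  lt_count_b : k < Nat.count (free a b d) b
  lt_count_d : k < Nat.count (free a b d) d

lemma Admissible.nth_lt {k l a b d : ℕ} (h : Admissible k l a b d) {i : ℕ} (hi : i < k + l) :
    Nat.nth (free a b d) i < k + l + 3 := by
  apply Nat.nth_lt_of_lt_count
  have := count_free_add_below h.a_ne_b h.a_ne_d h.b_ne_d (k + l + 3)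
  simp only [below, if_pos h.a_lt, if_pos h.b_lt, if_pos h.d_lt] at this
  omega

/-- `z₁ = c 0` always sits at position `0`, so the gaps `p`, `q` of `F` put `c k` at `p` and
`c (k + l - 1)` at `p + q`. -/
def Placement (k l p q a b d : ℕ) : Prop :=
  Admissible k l a b d ∧ ChainAt a b d k p ∧ ChainAt a b d (k + l - 1) (p + q)

/-- The poset of the theorem, with `z₁ = c 0`, `z₂ = c k` and `z₃ = c (k + l - 1)`. -/
structure Presentation (k l : ℕ) (X : Type) [PartialOrder X] where
  u : X
  v : X
  w : X
  c : ℕ → X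
  one_le_k : 1 ≤ k
  two_le_l : 2 ≤ l
  chain_inj : ∀ i j : ℕ, i ≤ k + l - 1 → j ≤ k + l - 1 → c i = c j → i = j
  chain_ne : ∀ i : ℕ, i ≤ k + l - 1 → c i ≠ u ∧ c i ≠ v ∧ c i ≠ w
  u_ne_v : u ≠ v
  u_ne_w : u ≠ w
  v_ne_w : v ≠ w
  cover : ∀ a : X, a = u ∨ a = v ∨ a = w ∨ ∃ i : ℕ, i ≤ k + l - 1 ∧ a = c i
  lt_iff : ∀ a b : X, a < b ↔
    (∃ i j : ℕ, i < j ∧ j ≤ k + l - 1 ∧ a = c i ∧ b = c j) ∨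
    (∃ i : ℕ, i ≤ k - 1 ∧ a = c i ∧ b = u) ∨
    (∃ j : ℕ, k + 1 ≤ j ∧ j ≤ k + l - 1 ∧ a = u ∧ b = c j) ∨
    (∃ i : ℕ, i ≤ k ∧ a = c i ∧ (b = v ∨ b = w))

namespace Presentation

variable {k l : ℕ} {X : Type} [PartialOrder X]

theorem card_eq [Fintype X] (P : Presentation k l X) : Fintype.card X = k + l + 3 := by
  classical
  have huniv : (univ : Finset X) =
      insert P.u (insert P.v (insert P.w ((range (k + l)).image P.c))) := by
    refine (eq_univ_of_forall fun x => ?_).symm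
    rcases P.cover x with rfl | rfl | rfl | ⟨i, hi, rfl⟩
    · exact mem_insert_self _ _
    · exact mem_insert_of_mem (mem_insert_self _ _)
    · exact mem_insert_of_mem (mem_insert_of_mem (mem_insert_self _ _))
    · refine mem_insert_of_mem (mem_insert_of_mem (mem_insert_of_mem (mem_image_of_mem _ ?_)))
      have := P.one_le_k
      simp only [mem_range]; omega
  have hchain : ∀ x ∈ (range (k + l)).image P.c, x ≠ P.u ∧ x ≠ P.v ∧ x ≠ P.w := by
    simp only [mem_image, mem_range]
    rintro _ ⟨i, hi, rfl⟩
    exact P.chain_ne i (by omega)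
  rw [← card_univ, huniv, card_insert_of_notMem, card_insert_of_notMem, card_insert_of_notMem,
    card_image_of_injOn, card_range]
  · intro i hi j hj hij
    simp only [coe_range, Set.mem_Iio] at hi hj
    exact P.chain_inj i j (by omega) (by omega) hij
  · exact fun h => (hchain _ h).2.2 rfl
  · simp only [mem_insert, not_or]
    exact ⟨P.v_ne_w, fun h => (hchain _ h).2.1 rfl⟩
  · simp only [mem_insert, not_or]
    exact ⟨P.u_ne_v, P.u_ne_w, fun h => (hchain _ h).1 rfl⟩

variable (P : Presentation k l X)

lemma chain_strictMonoOn : StrictMonoOn P.c (Set.Iic (k + l - 1)) :=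
  fun _ _ _ hj hij => (P.lt_iff _ _).2 (Or.inl ⟨_, _, hij, hj, rfl, rfl⟩)

lemma chain_lt_u {i : ℕ} (hi : i ≤ k - 1) : P.c i < P.u :=
  (P.lt_iff _ _).2 (Or.inr (Or.inl ⟨i, hi, rfl, rfl⟩))

lemma u_lt_chain {j : ℕ} (hj : k + 1 ≤ j) (hj' : j ≤ k + l - 1) : P.u < P.c j :=
  (P.lt_iff _ _).2 (Or.inr (Or.inr (Or.inl ⟨j, hj, hj', rfl, rfl⟩)))

lemma chain_lt_v {i : ℕ} (hi : i ≤ k) : P.c i < P.v :=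
  (P.lt_iff _ _).2 (Or.inr (Or.inr (Or.inr ⟨i, hi, rfl, Or.inl rfl⟩)))

lemma chain_lt_w {i : ℕ} (hi : i ≤ k) : P.c i < P.w :=
  (P.lt_iff _ _).2 (Or.inr (Or.inr (Or.inr ⟨i, hi, rfl, Or.inr rfl⟩)))

variable [Fintype X] {P} {L : X ≃ Fin (Fintype.card X)}

lemma free_chain {i : ℕ} (hi : i ≤ k + l - 1) :
    free (L P.u) (L P.v) (L P.w) (L (P.c i)) := by
  obtain ⟨hu, hv, hw⟩ := P.chain_ne i hi
  simp only [free, mem_insert, mem_singleton, not_or]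
  exact ⟨fun h => hu (L.injective (Fin.ext h)), fun h => hv (L.injective (Fin.ext h)),
    fun h => hw (L.injective (Fin.ext h))⟩

lemma count_chain (hL : StrictMono L) {i : ℕ} (hi : i ≤ k + l - 1) :
    Nat.count (free (L P.u) (L P.v) (L P.w)) (L (P.c i)) = i := by
  have hmono := hL.comp_strictMonoOn P.chain_strictMonoOn
  have hfilter : {x ∈ range (L (P.c i)) | free (L P.u) (L P.v) (L P.w) x} =
      (range i).image (fun j => (L (P.c j) : ℕ)) := by
    ext x
    simp only [mem_filter, mem_range, mem_image]
    constructor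
    · rintro ⟨hx, hfree⟩
      obtain ⟨y, hy⟩ := L.surjective ⟨x, hx.trans (L (P.c i)).isLt⟩
      obtain rfl : (L y : ℕ) = x := by rw [hy]
      rcases P.cover y with rfl | rfl | rfl | ⟨j, hj, rfl⟩
      · simp [free] at hfree
      · simp [free] at hfree
      · simp [free] at hfree
      · exact ⟨j, (hmono.lt_iff_lt hj hi).1 hx, rfl⟩
    · rintro ⟨j, hj, rfl⟩
      exact ⟨hmono (by simp only [Set.mem_Iic]; omega) hi hj, free_chain (by omega)⟩
  rw [Nat.count_eq_card_filter_range, hfilter, card_image_of_injOn, card_range]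
  intro j hj j' hj' h
  simp only [coe_range, Set.mem_Iio] at hj hj'
  exact P.chain_inj j j' (by omega) (by omega) (L.injective (Fin.ext h))

lemma chainAt_of_strictMono (hL : StrictMono L) {i : ℕ} (hi : i ≤ k + l - 1) :
    ChainAt (L P.u) (L P.v) (L P.w) i (L (P.c i)) :=
  ⟨free_chain hi, count_chain hL hi⟩

lemma admissible_of_strictMono (hL : StrictMono L) : Admissible k l (L P.u) (L P.v) (L P.w) := by
  have hk := P.one_le_k
  have hl := P.two_le_l
  have hN := P.card_eq
  have hk' : k - 1 ≤ k + l - 1 := by omega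
  have hk'' : k ≤ k + l - 1 := by omega
  have hk''' : k + 1 ≤ k + l - 1 := by omega
  have ne (x y : X) (h : x ≠ y) : (L x : ℕ) ≠ L y := fun e => h (L.injective (Fin.ext e))
  refine ⟨ne _ _ P.u_ne_v, ne _ _ P.u_ne_w, ne _ _ P.v_ne_w, hN ▸ (L _).isLt,
    hN ▸ (L _).isLt, hN ▸ (L _).isLt, ?_, ?_, ?_, ?_⟩
  · have := Nat.count_strict_mono (free_chain hk') (hL (P.chain_lt_u le_rfl))
    rw [count_chain hL hk'] at this
    omega
  · have := Nat.count_monotone (free (L P.u) (L P.v) (L P.w))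
      (le_of_lt (hL (P.u_lt_chain le_rfl hk''')))
    rwa [count_chain hL hk'''] at this
  · have := Nat.count_strict_mono (free_chain hk'') (hL (P.chain_lt_v le_rfl))
    rwa [count_chain hL hk''] at this
  · have := Nat.count_strict_mono (free_chain hk'') (hL (P.chain_lt_w le_rfl))
    rwa [count_chain hL hk''] at this

lemma ext {L' : X ≃ Fin (Fintype.card X)} (hL : StrictMono L) (hL' : StrictMono L')
    (hu : L P.u = L' P.u) (hv : L P.v = L' P.v) (hw : L P.w = L' P.w) : L = L' := by
  ext x
  rcases P.cover x with rfl | rfl | rfl | ⟨i, hi, rfl⟩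
  · rw [hu]
  · rw [hv]
  · rw [hw]
  · have h := chainAt_of_strictMono (P := P) hL hi
    rw [hu, hv, hw] at h
    exact h.eq (chainAt_of_strictMono hL' hi)

variable (P) {a b d : ℕ}

def placementMap (a b d : ℕ) (p : Fin (Fintype.card X)) : X :=
  if (p : ℕ) = a then P.u else if (p : ℕ) = b then P.v else if (p : ℕ) = d then P.w
  else P.c (Nat.count (free a b d) p)

lemma placementMap_nth (h : Admissible k l a b d) {i : ℕ} (hi : i ≤ k + l - 1) :
    P.placementMap a b d
      ⟨Nat.nth (free a b d) i, P.card_eq ▸ h.nth_lt (by have := P.one_le_k; omega)⟩ = P.c i := by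
  have hfree := Nat.nth_mem_of_infinite (free_infinite a b d) i
  simp only [free, mem_insert, mem_singleton, not_or] at hfree
  simp only [placementMap, if_neg hfree.1, if_neg hfree.2.1, if_neg hfree.2.2,
    Nat.count_nth_of_infinite (free_infinite a b d)]

lemma placementMap_bijective (h : Admissible k l a b d) :
    Function.Bijective (P.placementMap a b d) := by
  refine (Fintype.bijective_iff_surjective_and_card _).2 ⟨fun x => ?_, Fintype.card_fin _⟩
  rcases P.cover x with rfl | rfl | rfl | ⟨i, hi, rfl⟩
  · exact ⟨⟨a, P.card_eq ▸ h.a_lt⟩, by simp [placementMap]⟩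
  · exact ⟨⟨b, P.card_eq ▸ h.b_lt⟩, by simp [placementMap, h.a_ne_b.symm]⟩
  · exact ⟨⟨d, P.card_eq ▸ h.d_lt⟩, by simp [placementMap, h.a_ne_d.symm, h.b_ne_d.symm]⟩
  · exact ⟨_, P.placementMap_nth h hi⟩

noncomputable def linExt (h : Admissible k l a b d) : X ≃ Fin (Fintype.card X) :=
  (Equiv.ofBijective _ (P.placementMap_bijective h)).symm

variable {P}

lemma linExt_eq {h : Admissible k l a b d} {x : X} {p : Fin (Fintype.card X)}
    (hp : P.placementMap a b d p = x) : P.linExt h x = p :=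
  (Equiv.symm_apply_eq _).2 hp.symm

lemma linExt_u (h : Admissible k l a b d) : (P.linExt h P.u : ℕ) = a := by
  rw [linExt_eq (p := ⟨a, P.card_eq ▸ h.a_lt⟩) (by simp [placementMap])]

lemma linExt_v (h : Admissible k l a b d) : (P.linExt h P.v : ℕ) = b := by
  rw [linExt_eq (p := ⟨b, P.card_eq ▸ h.b_lt⟩) (by simp [placementMap, h.a_ne_b.symm])]

lemma linExt_w (h : Admissible k l a b d) : (P.linExt h P.w : ℕ) = d := by
  rw [linExt_eq (p := ⟨d, P.card_eq ▸ h.d_lt⟩)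
    (by simp [placementMap, h.a_ne_d.symm, h.b_ne_d.symm])]

lemma linExt_chain (h : Admissible k l a b d) {i : ℕ} (hi : i ≤ k + l - 1) :
    (P.linExt h (P.c i) : ℕ) = Nat.nth (free a b d) i := by
  rw [linExt_eq (P.placementMap_nth h hi)]

lemma strictMono_linExt (h : Admissible k l a b d) : StrictMono (P.linExt h) := by
  have hinf := free_infinite a b d
  have hk := P.one_le_k
  have hl := P.two_le_l
  intro x y hxy
  rw [Fin.lt_def]
  rcases (P.lt_iff x y).1 hxy with ⟨i, j, hij, hj, rfl, rfl⟩ | ⟨i, hi, rfl, rfl⟩ |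
    ⟨j, hj, hj', rfl, rfl⟩ | ⟨i, hi, rfl, rfl | rfl⟩
  · rw [linExt_chain h (by omega), linExt_chain h hj]
    exact Nat.nth_strictMono hinf hij
  · rw [linExt_chain h (by omega), linExt_u]
    exact (Nat.lt_nth_iff_count_lt hinf).1 (by have := h.le_count_a; omega)
  · rw [linExt_u, linExt_chain h hj']
    refine lt_of_le_of_ne ((Nat.count_le_iff_le_nth hinf).1 (by have := h.count_a_le; omega)) ?_
    intro e
    exact Nat.nth_mem_of_infinite hinf j (by rw [← e]; simp)
  · rw [linExt_chain h (by omega), linExt_v]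
    exact (Nat.lt_nth_iff_count_lt hinf).1 (by have := h.lt_count_b; omega)
  · rw [linExt_chain h (by omega), linExt_w]
    exact (Nat.lt_nth_iff_count_lt hinf).1 (by have := h.lt_count_d; omega)

lemma val_chain_zero (hL : StrictMono L) : (L (P.c 0) : ℕ) = 0 := by
  have h := admissible_of_strictMono (P := P) hL
  have hfree : free (L P.u) (L P.v) (L P.w) 0 := by
    simp only [free, mem_insert, mem_singleton, not_or]
    refine ⟨fun e => ?_, fun e => ?_, fun e => ?_⟩
    · have := h.le_count_a; rw [← e, Nat.count_zero] at this; have := P.one_le_k; omega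
    · have := h.lt_count_b; rw [← e, Nat.count_zero] at this; omega
    · have := h.lt_count_d; rw [← e, Nat.count_zero] at this; omega
  exact (chainAt_of_strictMono hL (Nat.zero_le _)).eq ⟨hfree, Nat.count_zero _⟩

variable (P)

theorem F_eq_card (p q : ℕ) :
    F X (P.c 0) (P.c k) (P.c (k + l - 1)) p q =
      Nat.card {t : ℕ × ℕ × ℕ // Placement k l p q t.1 t.2.1 t.2.2} := by
  have hk : k ≤ k + l - 1 := by have := P.two_le_l; omega
  refine Nat.card_congr (Equiv.ofBijective
    (fun L => ⟨((L.1 P.u : ℕ), (L.1 P.v : ℕ), (L.1 P.w : ℕ)), ?_⟩) ⟨?_, ?_⟩)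
  · obtain ⟨L, hL, h₂, h₃⟩ := L
    have h₁ := val_chain_zero (P := P) hL
    refine ⟨admissible_of_strictMono hL, ?_, ?_⟩
    · convert chainAt_of_strictMono hL hk using 1
      omega
    · convert chainAt_of_strictMono hL le_rfl using 1
      omega
  · intro L L' e
    simp only [Subtype.mk.injEq, Prod.mk.injEq] at e
    exact Subtype.ext (ext L.2.1 L'.2.1 (Fin.ext e.1) (Fin.ext e.2.1) (Fin.ext e.2.2))
  · rintro ⟨⟨a, b, d⟩, h, h₂, h₃⟩
    have hL := strictMono_linExt (P := P) h
    have hc : ∀ {i}, i ≤ k + l - 1 → ChainAt a b d i (P.linExt h (P.c i)) := fun hi => by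
      simpa only [linExt_u, linExt_v, linExt_w] using chainAt_of_strictMono (P := P) hL hi
    refine ⟨⟨P.linExt h, hL, ?_, ?_⟩, ?_⟩
    · rw [val_chain_zero hL, (hc hk).eq h₂, zero_add]
    · rw [(hc le_rfl).eq h₃, (hc hk).eq h₂]
    · simp only [linExt_u, linExt_v, linExt_w]

end Presentation

lemma placement_iff_below {k l p q a b d : ℕ} : Placement k l p q a b d ↔
    a ≠ b ∧ a ≠ d ∧ b ≠ d ∧ a < k + l + 3 ∧ b < k + l + 3 ∧ d < k + l + 3 ∧
    k + below a b d a ≤ a ∧ a ≤ k + 1 + below a b d a ∧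
    k + 1 + below a b d b ≤ b ∧ k + 1 + below a b d d ≤ d ∧
    (p ≠ a ∧ p ≠ b ∧ p ≠ d) ∧ p = k + below a b d p ∧
    (p + q ≠ a ∧ p + q ≠ b ∧ p + q ≠ d) ∧ p + q = k + l - 1 + below a b d (p + q) := by
  have hfree (x : ℕ) : free a b d x ↔ x ≠ a ∧ x ≠ b ∧ x ≠ d := by simp [free]
  constructor
  · rintro ⟨h, ⟨h₂, h₂'⟩, ⟨h₃, h₃'⟩⟩
    have hc := count_free_add_below h.a_ne_b h.a_ne_d h.b_ne_d
    have := hc a; have := hc b; have := hc d; have := hc p; have := hc (p + q)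
    have := h.le_count_a; have := h.count_a_le; have := h.lt_count_b; have := h.lt_count_d
    refine ⟨h.a_ne_b, h.a_ne_d, h.b_ne_d, h.a_lt, h.b_lt, h.d_lt, ?_, ?_, ?_, ?_,
      (hfree p).1 h₂, ?_, (hfree _).1 h₃, ?_⟩ <;> omega
  · rintro ⟨hab, had, hbd, ha, hb, hd, ha₁, ha₂, hb₁, hd₁, h₂, h₂', h₃, h₃'⟩
    have hc := count_free_add_below hab had hbd
    have := hc a; have := hc b; have := hc d; have := hc p; have := hc (p + q)
    exact ⟨⟨hab, had, hbd, ha, hb, hd, by omega, by omega, by omega, by omega⟩,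
      ⟨(hfree p).2 h₂, by omega⟩, ⟨(hfree _).2 h₃, by omega⟩⟩

variable {k l q a b d : ℕ}

lemma Placement.a_eq_of_gap (h : Placement k l k q a b d) :
    a = k + 1 + ((if b < a then 1 else 0) + (if d < a then 1 else 0)) := by
  obtain ⟨hab, had, hbd, -, -, -, ha₁, ha₂, hb, hd, ⟨hka, -, -⟩, hk, -⟩ := placement_iff_below.1 h
  simp only [below] at ha₁ ha₂ hb hd hk
  split_ifs at ha₁ ha₂ hk ⊢ <;> omega

lemma Placement.a_eq_of_gap_succ (h : Placement k l (k + 1) q a b d) : a = k := by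
  obtain ⟨-, -, -, -, -, -, ha, -, hb, hd, -, hk, -⟩ := placement_iff_below.1 h
  simp only [below] at ha hb hd hk
  split_ifs at hk <;> omega

lemma Placement.eq_of_gap {a' : ℕ} (h : Placement k l k q a b d)
    (h' : Placement k l k q a' b d) : a = a' := by
  obtain ⟨hab, had, hbd, -⟩ := placement_iff_below.1 h
  obtain ⟨ha'b, ha'd, -⟩ := placement_iff_below.1 h'
  exact eq_of_eq_add_ite hbd hab had ha'b ha'd h.a_eq_of_gap h'.a_eq_of_gap

theorem card_placement_k_l_add_two (hl : 2 ≤ l) :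
    Nat.card {t : ℕ × ℕ × ℕ // Placement k l k (l + 2) t.1 t.2.1 t.2.2} = (l + 1) * l := by
  rw [natCard_eq_card_of_proj (S := (Icc (k + 1) (k + l + 1)).offDiag)]
  · rw [offDiag_card, Nat.card_Icc, show k + l + 1 + 1 - (k + 1) = l + 1 by omega,
      ← Nat.mul_sub_one, Nat.add_sub_cancel]
  · intro a b d h
    obtain ⟨-, -, hbd, -, hb, hd, -, -, hb₁, hd₁, -, -, ⟨-, hb₃, hd₃⟩, -⟩ := placement_iff_below.1 h
    simp only [mem_offDiag, mem_Icc]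
    omega
  · exact fun a a' b d h h' => h.eq_of_gap h'
  · intro b d hbd
    simp only [mem_offDiag, mem_Icc] at hbd
    obtain ⟨a, hab, had, ha⟩ := exists_eq_add_ite (k + 1) b d
    refine ⟨a, placement_iff_below.2 ?_⟩
    simp only [below]
    constructorm* _ ∧ _ <;> split_ifs at ha ⊢ <;> omega

theorem card_placement_k_l_add_one (hl : 2 ≤ l) :
    Nat.card {t : ℕ × ℕ × ℕ // Placement k l k (l + 1) t.1 t.2.1 t.2.2} = 2 * l := by
  rw [natCard_eq_card_of_proj
    (S := Icc (k + 1) (k + l) ×ˢ {k + l + 2} ∪ {k + l + 2} ×ˢ Icc (k + 1) (k + l)),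
    card_product_singleton_union (by simp), Nat.card_Icc]
  · omega
  · intro a b d h
    have ha := h.a_eq_of_gap
    obtain ⟨-, -, hbd, -, hb, hd, -, -, hb₁, hd₁, -, -, ⟨ha₃, hb₃, hd₃⟩, h₃⟩ :=
      placement_iff_below.1 h
    simp only [below] at h₃ hb₁ hd₁
    simp only [mem_union, mem_product, mem_Icc, mem_singleton]
    split_ifs at ha h₃ <;> omega
  · exact fun a a' b d h h' => h.eq_of_gap h'
  · intro b d hbd
    simp only [mem_union, mem_product, mem_Icc, mem_singleton] at hbd
    obtain ⟨a, hab, had, ha⟩ := exists_eq_add_ite (k + 1) b d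
    refine ⟨a, placement_iff_below.2 ?_⟩
    simp only [below]
    constructorm* _ ∧ _ <;> split_ifs at ha ⊢ <;> omega

theorem card_placement_k_add_one_l_add_one (hl : 2 ≤ l) :
    Nat.card {t : ℕ × ℕ × ℕ // Placement k l (k + 1) (l + 1) t.1 t.2.1 t.2.2} =
      l * (l - 1) := by
  rw [natCard_eq_card_of_proj (S := (Icc (k + 2) (k + l + 1)).offDiag)]
  · rw [offDiag_card, Nat.card_Icc, show k + l + 1 + 1 - (k + 2) = l by omega, Nat.mul_sub_one]
  · intro a b d h
    obtain ⟨-, -, hbd, -, hb, hd, -, -, hb₁, hd₁, ⟨-, hb₂, hd₂⟩, -, ⟨-, hb₃, hd₃⟩, -⟩ :=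
      placement_iff_below.1 h
    simp only [mem_offDiag, mem_Icc]
    omega
  · exact fun a a' b d h h' => h.a_eq_of_gap_succ.trans h'.a_eq_of_gap_succ.symm
  · intro b d hbd
    simp only [mem_offDiag, mem_Icc] at hbd
    refine ⟨k, placement_iff_below.2 ?_⟩
    simp only [below]
    constructorm* _ ∧ _ <;> (try split_ifs) <;> omega

theorem card_placement_k_add_one_l (hl : 2 ≤ l) :
    Nat.card {t : ℕ × ℕ × ℕ // Placement k l (k + 1) l t.1 t.2.1 t.2.2} = 2 * (l - 1) := by
  rw [natCard_eq_card_of_proj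
    (S := Icc (k + 2) (k + l) ×ˢ {k + l + 2} ∪ {k + l + 2} ×ˢ Icc (k + 2) (k + l)),
    card_product_singleton_union (by simp), Nat.card_Icc]
  · omega
  · intro a b d h
    have ha := h.a_eq_of_gap_succ
    obtain ⟨-, -, hbd, -, hb, hd, -, -, hb₁, hd₁, ⟨-, hb₂, hd₂⟩, -, ⟨-, hb₃, hd₃⟩, h₃⟩ :=
      placement_iff_below.1 h
    simp only [below] at h₃
    simp only [mem_union, mem_product, mem_Icc, mem_singleton]
    split_ifs at h₃ <;> omega
  · exact fun a a' b d h h' => h.a_eq_of_gap_succ.trans h'.a_eq_of_gap_succ.symm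
  · intro b d hbd
    simp only [mem_union, mem_product, mem_Icc, mem_singleton] at hbd
    refine ⟨k, placement_iff_below.2 ?_⟩
    simp only [below]
    constructorm* _ ∧ _ <;> (try split_ifs) <;> omega

end CPC2

theorem CPC2_counterexample (k l : ℕ) (hk : 1 ≤ k) (hl : 2 ≤ l)
    (X : Type) [PartialOrder X] [Fintype X]
    (z₁ z₂ z₃ u v w : X) (c : ℕ → X)
    -- the chain z₁ ≺ x₁ ≺ ⋯ ≺ x_{k−1} ≺ z₂ ≺ y₁ ≺ ⋯ ≺ y_{ℓ−2} ≺ z₃ is c 0, …, c (k+l−1)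
    (hc0 : c 0 = z₁) (hck : c k = z₂) (hctop : c (k + l - 1) = z₃)
    (hchain_inj : ∀ i j : ℕ, i ≤ k + l - 1 → j ≤ k + l - 1 → c i = c j → i = j)
    (hdisj : ∀ i : ℕ, i ≤ k + l - 1 → c i ≠ u ∧ c i ≠ v ∧ c i ≠ w)
    (huv : u ≠ v) (huw : u ≠ w) (hvw : v ≠ w)
    (hsurj : ∀ a : X, a = u ∨ a = v ∨ a = w ∨ ∃ i : ℕ, i ≤ k + l - 1 ∧ a = c i)
    (horder : ∀ a b : X, a < b ↔
      (∃ i j : ℕ, i < j ∧ j ≤ k + l - 1 ∧ a = c i ∧ b = c j) ∨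
      (∃ i : ℕ, i ≤ k - 1 ∧ a = c i ∧ b = u) ∨
      (∃ j : ℕ, k + 1 ≤ j ∧ j ≤ k + l - 1 ∧ a = u ∧ b = c j) ∨
      (∃ i : ℕ, i ≤ k ∧ a = c i ∧ (b = v ∨ b = w))) :
    F X z₁ z₂ z₃ k (l + 2) = (l + 1) * l ∧
    F X z₁ z₂ z₃ (k + 1) l = 2 * (l - 1) ∧
    F X z₁ z₂ z₃ k (l + 1) = 2 * l ∧
    F X z₁ z₂ z₃ (k + 1) (l + 1) = l * (l - 1) ∧
    F X z₁ z₂ z₃ k (l + 1) * F X z₁ z₂ z₃ (k + 1) (l + 1) <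
      F X z₁ z₂ z₃ k (l + 2) * F X z₁ z₂ z₃ (k + 1) l := by
  subst hc0 hck hctop
  let P : CPC2.Presentation k l X :=
    ⟨u, v, w, c, hk, hl, hchain_inj, hdisj, huv, huw, hvw, hsurj, horder⟩
  have h₁ : F X (c 0) (c k) (c (k + l - 1)) k (l + 2) = (l + 1) * l :=
    (P.F_eq_card k (l + 2)).trans (CPC2.card_placement_k_l_add_two hl)
  have h₂ : F X (c 0) (c k) (c (k + l - 1)) (k + 1) l = 2 * (l - 1) :=
    (P.F_eq_card (k + 1) l).trans (CPC2.card_placement_k_add_one_l hl)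
  have h₃ : F X (c 0) (c k) (c (k + l - 1)) k (l + 1) = 2 * l :=
    (P.F_eq_card k (l + 1)).trans (CPC2.card_placement_k_l_add_one hl)
  have h₄ : F X (c 0) (c k) (c (k + l - 1)) (k + 1) (l + 1) = l * (l - 1) :=
    (P.F_eq_card (k + 1) (l + 1)).trans (CPC2.card_placement_k_add_one_l_add_one hl)
  refine ⟨h₁, h₂, h₃, h₄, ?_⟩
  rw [h₁, h₂, h₃, h₄]
  obtain ⟨m, rfl⟩ := Nat.exists_eq_add_of_le hl
  rw [show 2 + m - 1 = m + 1 by omega]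
  nlinarith
end

section
/- Let P = (X,≺) be a finite poset with n elements and z₁ ≺ z₂ ≺ z₃ distinct. If F(k+2,ℓ) > 0, then F(k+1,ℓ) ≤ nℓ·F(k+2,ℓ). -/
lemma Nat.card_le_card_of_subset_range {α β : Type*} [Finite β] (d : β → α) {S : Set α}
    (h : S ⊆ Set.range d) : Nat.card S ≤ Nat.card β :=
  (Nat.card_mono (Set.finite_range d) h).trans (Finite.card_range_le d)

/-- `Fin.cycleIcc` with endpoints in `ℕ`, the identity unless `u ≤ v < n`:
`L.trans (natCycleIcc n u v)` moves the element at position `v` down to `u`, shifting those at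
`[u, v)` up by one. -/
def natCycleIcc (n u v : ℕ) : Equiv.Perm (Fin n) :=
  if h : u ≤ v ∧ v < n then Fin.cycleIcc ⟨u, by omega⟩ ⟨v, h.2⟩ else 1

lemma natCycleIcc_val {n u v : ℕ} (huv : u ≤ v) (hv : v < n) (r : Fin n) :
    (natCycleIcc n u v r : ℕ) =
      if (r : ℕ) = v then u else if u ≤ r ∧ (r : ℕ) < v then r + 1 else r := by
  have : NeZero n := ⟨by omega⟩
  rw [natCycleIcc, dif_pos ⟨huv, hv⟩]
  rcases Nat.lt_or_ge r u with hru | hur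
  · rw [Fin.cycleIcc_of_lt (Fin.lt_def.2 hru)]; split_ifs <;> omega
  rcases Nat.lt_or_ge v r with hvr | hrv
  · rw [Fin.cycleIcc_of_gt (Fin.lt_def.2 hvr)]; split_ifs <;> omega
  rcases hrv.lt_or_eq with hrv | hrv
  · rw [Fin.cycleIcc_of_ge_of_lt (Fin.le_def.2 hur) (Fin.lt_def.2 hrv),
      Fin.val_add_one_of_lt' (by omega)]
    split_ifs <;> omega
  · rw [show r = ⟨v, hv⟩ from Fin.ext hrv, Fin.cycleIcc_of_last (Fin.le_def.2 huv), if_pos rfl]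

lemma natCycleIcc_symm_val {n u v : ℕ} (huv : u ≤ v) (hv : v < n) (r : Fin n) :
    ((natCycleIcc n u v).symm r : ℕ) =
      if (r : ℕ) = u then v else if u < r ∧ (r : ℕ) ≤ v then r - 1 else r := by
  have h := natCycleIcc_val huv hv ((natCycleIcc n u v).symm r)
  rw [Equiv.apply_symm_apply] at h
  split_ifs at h ⊢ <;> omega

open Finset

section LinearExtension

variable {X : Type*} [PartialOrder X] {n : ℕ}

def IsMovableUp (L : X ≃ Fin n) (w : X) (a : ℕ) : Prop :=
  ∀ y, (L w : ℕ) < L y → (L y : ℕ) ≤ a → ¬w < y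

def IsMovableDown (L : X ≃ Fin n) (w : X) (a : ℕ) : Prop :=
  ∀ y, a ≤ (L y : ℕ) → (L y : ℕ) < L w → ¬y < w

lemma StrictMono.trans_natCycleIcc {L : X ≃ Fin n} (hL : StrictMono L) {w : X} {u : ℕ}
    (hu : u ≤ L w) (hw : IsMovableDown L w u) :
    StrictMono (L.trans (natCycleIcc n u (L w))) := by
  intro x y hxy
  have hLxy : (L x : ℕ) < L y := hL hxy
  rw [Fin.lt_def]
  simp only [Equiv.trans_apply, natCycleIcc_val hu (L w).isLt]
  by_cases hy : y = w
  · subst hy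
    have hxu : ¬u ≤ L x := fun hux ↦ hw x hux hLxy hxy
    split_ifs <;> omega
  · have : (L y : ℕ) ≠ L w := by simpa [Fin.val_inj] using hy
    split_ifs <;> omega

lemma StrictMono.trans_natCycleIcc_symm {L : X ≃ Fin n} (hL : StrictMono L) {w : X} {v : ℕ}
    (hv : L w ≤ v) (hvn : v < n) (hw : IsMovableUp L w v) :
    StrictMono (L.trans (natCycleIcc n (L w) v).symm) := by
  intro x y hxy
  have hLxy : (L x : ℕ) < L y := hL hxy
  rw [Fin.lt_def]
  simp only [Equiv.trans_apply, natCycleIcc_symm_val hv hvn]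
  by_cases hx : x = w
  · subst hx
    have hyv : ¬(L y : ℕ) ≤ v := fun hyv ↦ hw y hLxy hyv hxy
    split_ifs <;> omega
  · have : (L x : ℕ) ≠ L w := by simpa [Fin.val_inj] using hx
    split_ifs <;> omega

lemma lt_of_forall_not_isMovableUp {L : X ≃ Fin n} {z : X}
    (h : ∀ y, (L y : ℕ) < L z → ¬IsMovableUp L y (L z)) (y : X) (hy : (L y : ℕ) < L z) :
    y < z := by
  obtain ⟨x, hyx, hxz, hlt⟩ : ∃ x, (L y : ℕ) < L x ∧ (L x : ℕ) ≤ L z ∧ y < x := by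
    simpa [IsMovableUp] using h y hy
  rcases hxz.lt_or_eq with hxz | hxz
  · exact hlt.trans (lt_of_forall_not_isMovableUp h x hxz)
  · rwa [L.injective (Fin.ext hxz)] at hlt
termination_by (L z : ℕ) - L y

lemma lt_of_forall_not_isMovableDown {L : X ≃ Fin n} {z : X}
    (h : ∀ y, (L z : ℕ) < L y → ¬IsMovableDown L y (L z)) (y : X) (hy : (L z : ℕ) < L y) :
    z < y := by
  obtain ⟨x, hzx, hxy, hlt⟩ : ∃ x, (L z : ℕ) ≤ L x ∧ (L x : ℕ) < L y ∧ x < y := by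
    simpa [IsMovableDown] using h y hy
  rcases hzx.lt_or_eq with hzx | hzx
  · exact (lt_of_forall_not_isMovableDown h x hzx).trans hlt
  · rwa [← L.injective (Fin.ext hzx)] at hlt
termination_by (L y : ℕ)

lemma le_apply_of_forall_lt {L M : X ≃ Fin n} (hM : StrictMono M) {z : X}
    (h : ∀ y, (L y : ℕ) < L z → y < z) : (L z : ℕ) ≤ M z :=
  calc (L z : ℕ) = #(Iio (L z)) := (Fin.card_Iio _).symm
    _ ≤ #(Iio (M z)) := card_le_card_of_injOn (M ∘ L.symm)
        (fun r hr ↦ mem_Iio.2 <| hM <| h _ <| by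
          rw [L.apply_symm_apply]; exact (mem_Iio.1 hr : r < L z))
        ((M.injective.comp L.symm.injective).injOn)
    _ = M z := Fin.card_Iio _

lemma apply_le_of_forall_gt {L M : X ≃ Fin n} (hM : StrictMono M) {z : X}
    (h : ∀ y, (L z : ℕ) < L y → z < y) : (M z : ℕ) ≤ L z := by
  have : n - 1 - L z ≤ n - 1 - M z :=
    calc n - 1 - L z = #(Ioi (L z)) := (Fin.card_Ioi _).symm
      _ ≤ #(Ioi (M z)) := card_le_card_of_injOn (M ∘ L.symm)
          (fun r hr ↦ mem_Ioi.2 <| hM <| h _ <| by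
            rw [L.apply_symm_apply]; exact (mem_Ioi.1 hr : L z < r))
          ((M.injective.comp L.symm.injective).injOn)
      _ = n - 1 - M z := Fin.card_Ioi _
  have := (L z).isLt
  omega

end LinearExtension

section Encoding

variable {X : Type*} [PartialOrder X] {n : ℕ} {z₁ z₂ z₃ : X} {k l : ℕ} {L : X ≃ Fin n}

def IsGapped (L : X ≃ Fin n) (z₁ z₂ z₃ : X) (k l : ℕ) : Prop :=
  (L z₂ : ℕ) = L z₁ + k ∧ (L z₃ : ℕ) = L z₂ + l

/-- Undoes the moves of the `inDecodeRange_of_*` lemmas: for `j = 0` the element moved up to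
just after `z₁` (if `p ≤ M z₁`) or down to just before `z₂` returns to position `p`; for `j > 0`
the elements moved down to just before `z₃` and `z₂` return to `p` and to `j` above where `z₂`
was. -/
def decode (z₁ z₂ z₃ : X) (M : X ≃ Fin n) (p j : ℕ) : X ≃ Fin n :=
  if j = 0 then
    if p ≤ M z₁ then M.trans (natCycleIcc n p (M z₁ + 1))
    else M.trans (natCycleIcc n (M z₂ - 1) p).symm
  else
    (M.trans (natCycleIcc n (M z₃ - 1) p).symm).trans
      (natCycleIcc n (M z₂ - 1) (M z₂ - 1 + j)).symm

variable (z₁ z₂ z₃ k l) in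
def InDecodeRange (L : X ≃ Fin n) : Prop :=
  ∃ M : X ≃ Fin n, (StrictMono M ∧ IsGapped M z₁ z₂ z₃ (k + 2) l) ∧
    ∃ p < n, ∃ j < l, decode z₁ z₂ z₃ M p j = L

lemma inDecodeRange_of_isMovableUp (hL : StrictMono L) (hgap : IsGapped L z₁ z₂ z₃ (k + 1) l)
    (hl : 0 < l) {w : X} (hw₁ : (L w : ℕ) < L z₁) (hw : IsMovableUp L w (L z₁)) :
    InDecodeRange z₁ z₂ z₃ k l L := by
  obtain ⟨h₂, h₃⟩ := hgap
  have hval := natCycleIcc_symm_val hw₁.le (L z₁).isLt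
  set M := L.trans (natCycleIcc n (L w) (L z₁)).symm
  have hM : ∀ x, (M x : ℕ) = _ := fun x ↦ hval (L x)
  have hM₁ : (M z₁ : ℕ) + 1 = L z₁ := by rw [hM]; split_ifs <;> omega
  refine ⟨M, ⟨hL.trans_natCycleIcc_symm hw₁.le (L z₁).isLt hw, ?_⟩, L w, (L w).isLt, 0, hl, ?_⟩
  · simp only [IsGapped, hM]
    split_ifs <;> omega
  · rw [decode, if_pos rfl, if_pos (by omega), hM₁]
    ext x
    simp [M]

lemma inDecodeRange_of_isMovableDown (hL : StrictMono L)
    (hgap : IsGapped L z₁ z₂ z₃ (k + 1) l) (hl : 0 < l) {w : X} (hw₃ : (L z₃ : ℕ) < L w)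
    (hw : IsMovableDown L w (L z₂)) :
    InDecodeRange z₁ z₂ z₃ k l L := by
  obtain ⟨h₂, h₃⟩ := hgap
  have hu : (L z₂ : ℕ) ≤ L w := by omega
  have hval := natCycleIcc_val hu (L w).isLt
  set M := L.trans (natCycleIcc n (L z₂) (L w))
  have hM : ∀ x, (M x : ℕ) = _ := fun x ↦ hval (L x)
  have hM₁ : (M z₁ : ℕ) = L z₁ := by rw [hM]; split_ifs <;> omega
  have hM₂ : (M z₂ : ℕ) - 1 = L z₂ := by rw [hM]; split_ifs <;> omega
  refine ⟨M, ⟨hL.trans_natCycleIcc hu hw, ?_⟩, L w, (L w).isLt, 0, hl, ?_⟩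
  · simp only [IsGapped, hM]
    split_ifs <;> omega
  · rw [decode, if_pos rfl, if_neg (by omega), hM₂]
    ext x
    simp [M]

lemma inDecodeRange_of_isMovableDown_two (hL : StrictMono L)
    (hgap : IsGapped L z₁ z₂ z₃ (k + 1) l) {x w : X} (hx₂ : (L z₂ : ℕ) < L x)
    (hx₃ : (L x : ℕ) < L z₃) (hx : IsMovableDown L x (L z₂)) (hw₃ : (L z₃ : ℕ) < L w)
    (hw : IsMovableDown L w (L z₃)) :
    InDecodeRange z₁ z₂ z₃ k l L := by
  have hval := natCycleIcc_val hx₂.le (L x).isLt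
  set L' := L.trans (natCycleIcc n (L z₂) (L x))
  have hL' : ∀ y, (L' y : ℕ) = _ := fun y ↦ hval (L y)
  have hL'_of_le : ∀ y, (L z₃ : ℕ) ≤ L' y → L' y = L y := fun y hy ↦ by
    rw [hL'] at hy; exact Fin.ext (by rw [hL']; split_ifs at hy ⊢ <;> omega)
  have hL'w : L' w = L w := hL'_of_le w (by rw [hL']; split_ifs <;> omega)
  have hw' : IsMovableDown L' w (L z₃) := fun y hy hyw ↦ by
    have e := hL'_of_le y hy
    rw [hL'w, e] at hyw; rw [e] at hy; exact hw y hy hyw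
  have hval' := natCycleIcc_val hw₃.le (L w).isLt
  set M := L'.trans (natCycleIcc n (L z₃) (L w))
  have hM : ∀ y, (M y : ℕ) = _ := fun y ↦ hval' (L' y)
  have hMmono : StrictMono M := by
    have := (hL.trans_natCycleIcc hx₂.le hx).trans_natCycleIcc (by rw [hL'w]; exact hw₃.le) hw'
    rwa [hL'w] at this
  obtain ⟨h₂, h₃⟩ := hgap
  have hM₁ : (M z₁ : ℕ) = L z₁ := by rw [hM, hL']; split_ifs <;> omega
  have hM₂ : (M z₂ : ℕ) = L z₂ + 1 := by rw [hM, hL']; split_ifs <;> omega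
  have hM₃ : (M z₃ : ℕ) = L z₃ + 1 := by rw [hM, hL']; split_ifs <;> omega
  refine ⟨M, ⟨hMmono, by simp only [IsGapped]; omega⟩, L w, (L w).isLt, L x - L z₂, by omega, ?_⟩
  rw [decode, if_neg (by omega), show (M z₃ : ℕ) - 1 = L z₃ by omega,
    show (M z₂ : ℕ) - 1 = L z₂ by omega, show (L z₂ : ℕ) + (L x - L z₂) = L x by omega]
  ext y
  simp [M, L']

lemma inDecodeRange (hL : StrictMono L) (hgap : IsGapped L z₁ z₂ z₃ (k + 1) l) (hl : 0 < l)
    (h23 : z₂ < z₃) {M₀ : X ≃ Fin n} (hM₀ : StrictMono M₀)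
    (hM₀gap : IsGapped M₀ z₁ z₂ z₃ (k + 2) l) :
    InDecodeRange z₁ z₂ z₃ k l L := by
  by_cases h₁ : ∃ w, (L w : ℕ) < L z₁ ∧ IsMovableUp L w (L z₁)
  · obtain ⟨w, hw₁, hw⟩ := h₁
    exact inDecodeRange_of_isMovableUp hL hgap hl hw₁ hw
  have hz₁ : (L z₁ : ℕ) ≤ M₀ z₁ :=
    le_apply_of_forall_lt hM₀ (lt_of_forall_not_isMovableUp fun y hy hmov ↦ h₁ ⟨y, hy, hmov⟩)
  by_cases h₂ : ∃ w, (L z₃ : ℕ) < L w ∧ IsMovableDown L w (L z₂)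
  · obtain ⟨w, hw₃, hw⟩ := h₂
    exact inDecodeRange_of_isMovableDown hL hgap hl hw₃ hw
  obtain ⟨hL₂, hL₃⟩ := hgap
  obtain ⟨hM₀₂, hM₀₃⟩ := hM₀gap
  obtain ⟨x, hx₂, hx₃, hx⟩ :
      ∃ x, (L z₂ : ℕ) < L x ∧ (L x : ℕ) < L z₃ ∧ IsMovableDown L x (L z₂) := by
    by_contra! hno
    have : (M₀ z₂ : ℕ) ≤ L z₂ := apply_le_of_forall_gt hM₀ <| lt_of_forall_not_isMovableDown
      fun y hy hmov ↦ by
        rcases lt_trichotomy (L y : ℕ) (L z₃) with hy₃ | hy₃ | hy₃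
        · exact hno y hy hy₃ hmov
        · rw [L.injective (Fin.ext hy₃)] at hmov
          exact hmov z₂ le_rfl (by omega) h23
        · exact h₂ ⟨y, hy₃, hmov⟩
    omega
  obtain ⟨w, hw₃, hw⟩ : ∃ w, (L z₃ : ℕ) < L w ∧ IsMovableDown L w (L z₃) := by
    by_contra! hno
    have : (M₀ z₃ : ℕ) ≤ L z₃ :=
      apply_le_of_forall_gt hM₀ (lt_of_forall_not_isMovableDown hno)
    omega
  exact inDecodeRange_of_isMovableDown_two hL ⟨hL₂, hL₃⟩ hx₂ hx₃ hx hw₃ hw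

end Encoding

theorem ratio_bound_down_k_general (X : Type) [PartialOrder X] [Fintype X]
    (n : ℕ) (hn : Fintype.card X = n)
    (z₁ z₂ z₃ : X) (h23 : z₂ < z₃)
    (k l : ℕ) (hl : 1 ≤ l)
    (hpos : 0 < F X z₁ z₂ z₃ (k + 2) l) :
    F X z₁ z₂ z₃ (k + 1) l ≤ n * l * F X z₁ z₂ z₃ (k + 2) l := by
  subst hn
  obtain ⟨⟨M₀, hM₀, hM₀gap⟩⟩ := Nat.card_pos_iff.mp hpos |>.1
  let Good (L : X ≃ Fin (Fintype.card X)) : Prop := StrictMono L ∧ IsGapped L z₁ z₂ z₃ (k + 2) l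
  let d (t : Subtype Good × Fin (Fintype.card X) × Fin l) := decode z₁ z₂ z₃ t.1.1 t.2.1 t.2.2
  have hrange : {L : X ≃ Fin (Fintype.card X) | StrictMono L ∧ IsGapped L z₁ z₂ z₃ (k + 1) l} ⊆
      Set.range d := by
    rintro L ⟨hL, hgap⟩
    obtain ⟨M, hM, p, hp, j, hj, rfl⟩ := inDecodeRange hL hgap hl h23 hM₀ hM₀gap
    exact ⟨(⟨M, hM⟩, ⟨p, hp⟩, ⟨j, hj⟩), rfl⟩
  calc F X z₁ z₂ z₃ (k + 1) l ≤ Nat.card (Subtype Good × Fin (Fintype.card X) × Fin l) :=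
        Nat.card_le_card_of_subset_range d hrange
    _ = Fintype.card X * l * F X z₁ z₂ z₃ (k + 2) l := by
        rw [Nat.card_prod, Nat.card_prod, Nat.card_fin, Nat.card_fin, mul_comm]
        rfl

theorem ratio_bound_down_k (X : Type) [PartialOrder X] [Fintype X]
    (n : ℕ) (hn : Fintype.card X = n)
    (z₁ z₂ z₃ : X) (h12 : z₁ < z₂) (h23 : z₂ < z₃)
    (k l : ℕ) (hk : 1 ≤ k) (hl : 1 ≤ l)
    (hpos : 0 < F X z₁ z₂ z₃ (k + 2) l) :
    F X z₁ z₂ z₃ (k + 1) l ≤ n * l * F X z₁ z₂ z₃ (k + 2) l :=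
  ratio_bound_down_k_general X n hn z₁ z₂ z₃ h23 k l hl hpos
end
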